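/- arXiv:math/0309405 — 9 statements merged into one kernel-verified Lean document; each statement's English description precedes it below -/
import Mathlib

section
/- Let E be a Banach space with a normalized Schauder basis (e_n), and let D ⊆ E be a weakly compact subset. Then for every δ > 0 and every n ∈ ℕ there exists m > n such that for every x = ∑_j a_j e_j ∈ D there is an index j ∈ [n, m) with |a_j| < δ. -/
/-!
Along the expansion of `x`, the terms `a_j(x) • e_j` tend to `0`, so `a_j(x) → 0` since
`‖e_j‖ = 1`. The sets `U_m = {x | |a_j(x)| < δ for some j ∈ [n, m)}` are weakly open, increase
with `m`, and hence cover `D`; weak compactness puts `D` inside a single `U_m`.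
-/

open Filter Topology

/-- A set is weakly compact if it is compact in the weak topology. -/
def IsWeaklyCompact {E : Type*} [NormedAddCommGroup E] [NormedSpace ℝ E] (D : Set E) : Prop :=
  IsCompact (toWeakSpace ℝ E '' D)

theorem tendsto_zero_of_tendsto_sum_range {G : Type*} [AddCommGroup G] [TopologicalSpace G]
    [IsTopologicalAddGroup G] {f : ℕ → G} {x : G}
    (h : Tendsto (fun n => ∑ j ∈ Finset.range n, f j) atTop (𝓝 x)) :
    Tendsto f atTop (𝓝 0) := by
  simpa [Function.comp_def, Finset.sum_range_succ] using (h.comp (tendsto_add_atTop_nat 1)).sub h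

theorem tendsto_coeff_zero_of_tendsto_sum_smul {E : Type*} [NormedAddCommGroup E]
    [NormedSpace ℝ E] {e : ℕ → E} (he : ∀ j, ‖e j‖ = 1) {c : ℕ → ℝ} {x : E}
    (h : Tendsto (fun n => ∑ j ∈ Finset.range n, c j • e j) atTop (𝓝 x)) :
    Tendsto c atTop (𝓝 0) := by
  rw [tendsto_zero_iff_norm_tendsto_zero]
  simpa [norm_smul, he] using (tendsto_zero_of_tendsto_sum_range h).norm

theorem IsCompact.exists_forall_exists_Ico_abs_lt {X : Type*} [TopologicalSpace X] {K : Set X}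
    (hK : IsCompact K) {f : ℕ → X → ℝ} (hf : ∀ j, Continuous (f j))
    (hlim : ∀ x ∈ K, Tendsto (fun j => f j x) atTop (𝓝 0)) {δ : ℝ} (hδ : 0 < δ) (n : ℕ) :
    ∃ m, n < m ∧ ∀ x ∈ K, ∃ j, n ≤ j ∧ j < m ∧ |f j x| < δ := by
  set U : ℕ → Set X := fun m => {x | ∃ j, n ≤ j ∧ j < m ∧ |f j x| < δ}
  have hU_open (m : ℕ) : IsOpen (U m) := by
    have : U m = ⋃ j ∈ Finset.Ico n m, {x | |f j x| < δ} := by ext; simp [U, and_assoc]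
    rw [this]
    exact isOpen_biUnion fun j _ => isOpen_lt (hf j).abs continuous_const
  have hU_mono : Monotone U := fun m m' hmm' x ⟨j, hnj, hjm, hj⟩ =>
    ⟨j, hnj, hjm.trans_le hmm', hj⟩
  have hKU : K ⊆ ⋃ m, U m := fun x hx => by
    have hsmall : ∀ᶠ j in atTop, |f j x| < δ := by
      simpa using (hlim x hx).abs.eventually (gt_mem_nhds (by simpa using hδ))
    obtain ⟨j, hj, hnj⟩ := (hsmall.and (eventually_ge_atTop n)).exists
    exact Set.mem_iUnion.2 ⟨j + 1, j, hnj, j.lt_add_one, hj⟩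
  obtain ⟨m, hm⟩ := hK.elim_directed_cover U hU_open hKU hU_mono.directed_le
  exact ⟨max m (n + 1), by omega, fun x hx => hU_mono (le_max_left _ _) (hm hx)⟩

theorem stmt_0_general {E : Type*} [NormedAddCommGroup E] [NormedSpace ℝ E]
    (e : ℕ → E) (a : ℕ → E →L[ℝ] ℝ)
    (hnorm : ∀ j, ‖e j‖ = 1)
    (hexp : ∀ x : E, Tendsto (fun n => ∑ j ∈ Finset.range n, a j x • e j) atTop (nhds x))
    (D : Set E) (hD : IsWeaklyCompact D) :
    ∀ δ : ℝ, 0 < δ → ∀ n : ℕ, ∃ m : ℕ, n < m ∧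
      ∀ x ∈ D, ∃ j : ℕ, n ≤ j ∧ j < m ∧ |a j x| < δ := by
  intro δ hδ n
  obtain ⟨m, hnm, hm⟩ := hD.exists_forall_exists_Ico_abs_lt
    (f := fun j y => a j ((toWeakSpace ℝ E).symm y)) (fun j => WeakBilin.eval_continuous _ (a j))
    (by
      rintro _ ⟨x, -, rfl⟩
      simpa using tendsto_coeff_zero_of_tendsto_sum_smul hnorm (hexp x))
    hδ n
  exact ⟨m, hnm, fun x hx => by simpa using hm _ (Set.mem_image_of_mem _ hx)⟩

/-- If `E` is a Banach space with a normalized Schauder basis `(e_n)` (with coordinate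
functionals `a_n`) and `D ⊆ E` is weakly compact, then for every `δ > 0` and `n` there is
`m > n` so that every `x ∈ D` has some coordinate `j ∈ [n, m)` with `|a_j(x)| < δ`. -/
theorem stmt_0 {E : Type*} [NormedAddCommGroup E] [NormedSpace ℝ E] [CompleteSpace E]
    (e : ℕ → E) (a : ℕ → E →L[ℝ] ℝ)
    (hnorm : ∀ j, ‖e j‖ = 1)
    (hbio : ∀ i j, a i (e j) = if i = j then 1 else 0)
    (hexp : ∀ x : E, Tendsto (fun n => ∑ j ∈ Finset.range n, a j x • e j) atTop (nhds x))
    (D : Set E) (hD : IsWeaklyCompact D) :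
    ∀ δ : ℝ, 0 < δ → ∀ n : ℕ, ∃ m : ℕ, n < m ∧
      ∀ x ∈ D, ∃ j : ℕ, n ≤ j ∧ j < m ∧ |a j x| < δ :=
  stmt_0_general e a hnorm hexp D hD
end

section
/- If a Banach space E has the bounded weakly compact approximation property, then the Banach algebra W(E) of weakly compact operators on E has a bounded left approximate identity. -/
/-!
The weak closures of the images of the unit ball under finitely many weakly compact operators
`y` form a weakly compact set `D`. The W.A.P. gives a weakly compact `V` with `‖V‖ ≤ C` that
moves every point of `D` by less than `ε / 2`, so `‖y - V ∘ y‖ ≤ ε / 2 < ε` for each `y`.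
-/

open Filter Topology

/-- An operator is weakly compact if the image of the closed unit ball is relatively
compact in the weak topology. -/
def IsWeaklyCompactOp {E F : Type*} [NormedAddCommGroup E] [NormedSpace ℝ E]
    [NormedAddCommGroup F] [NormedSpace ℝ F] (V : E →L[ℝ] F) : Prop :=
  IsCompact (closure (toWeakSpace ℝ F '' (V '' Metric.closedBall 0 1)))

/-- `E` has the W.A.P. with constant `C`. -/
def HasWAPWith (E : Type*) [NormedAddCommGroup E] [NormedSpace ℝ E] (C : ℝ) : Prop :=
  ∀ D : Set E, IsWeaklyCompact D → ∀ ε : ℝ, 0 < ε →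
    ∃ V : E →L[ℝ] E, IsWeaklyCompactOp V ∧ ‖V‖ ≤ C ∧ ∀ x ∈ D, ‖x - V x‖ < ε

section

variable {E F : Type*} [NormedAddCommGroup E] [NormedSpace ℝ E]
  [NormedAddCommGroup F] [NormedSpace ℝ F]

theorem isWeaklyCompact_preimage_toWeakSpace {K : Set (WeakSpace ℝ E)} (hK : IsCompact K) :
    IsWeaklyCompact (toWeakSpace ℝ E ⁻¹' K) := by
  rwa [IsWeaklyCompact, Set.image_preimage_eq K (toWeakSpace ℝ E).surjective]

theorem exists_isWeaklyCompact_forall_image_closedBall_subset {Y : Finset (F →L[ℝ] E)}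
    (hY : ∀ y ∈ Y, IsWeaklyCompactOp y) :
    ∃ D : Set E, IsWeaklyCompact D ∧ ∀ y ∈ Y, y '' Metric.closedBall 0 1 ⊆ D := by
  let K : Set (WeakSpace ℝ E) :=
    ⋃ y ∈ Y, closure (toWeakSpace ℝ E '' (y '' Metric.closedBall 0 1))
  refine ⟨toWeakSpace ℝ E ⁻¹' K,
    isWeaklyCompact_preimage_toWeakSpace (Y.finite_toSet.isCompact_biUnion hY), ?_⟩
  rintro y hy _ ⟨z, hz, rfl⟩
  show toWeakSpace ℝ E (y z) ∈ K
  exact Set.mem_biUnion hy (subset_closure ⟨y z, ⟨z, hz, rfl⟩, rfl⟩)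

theorem norm_sub_comp_le_of_forall_image_closedBall {y : F →L[ℝ] E} {V : E →L[ℝ] E} {δ : ℝ}
    (hδ : 0 ≤ δ) (hV : ∀ x ∈ y '' Metric.closedBall 0 1, ‖x - V x‖ ≤ δ) :
    ‖y - V.comp y‖ ≤ δ :=
  ContinuousLinearMap.opNorm_le_of_unit_norm hδ fun z hz =>
    hV (y z) ⟨z, by simp [hz], rfl⟩

end

theorem stmt_1_general {E : Type*} [NormedAddCommGroup E] [NormedSpace ℝ E]
    (hWAP : ∃ C : ℝ, HasWAPWith E C) :
    ∃ C : ℝ, ∀ Y : Finset (E →L[ℝ] E), (∀ y ∈ Y, IsWeaklyCompactOp y) →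
      ∀ ε : ℝ, 0 < ε → ∃ x : E →L[ℝ] E, IsWeaklyCompactOp x ∧ ‖x‖ ≤ C ∧
        ∀ y ∈ Y, ‖y - x.comp y‖ < ε := by
  obtain ⟨C, hC⟩ := hWAP
  refine ⟨C, fun Y hY ε hε => ?_⟩
  obtain ⟨D, hD, hYD⟩ := exists_isWeaklyCompact_forall_image_closedBall_subset hY
  obtain ⟨V, hVw, hVC, hVD⟩ := hC D hD (ε / 2) (half_pos hε)
  refine ⟨V, hVw, hVC, fun y hy => ?_⟩
  calc ‖y - V.comp y‖ ≤ ε / 2 :=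
        norm_sub_comp_le_of_forall_image_closedBall (half_pos hε).le
          fun x hx => (hVD x (hYD y hy hx)).le
    _ < ε := half_lt_self hε

/-- If a Banach space `E` has the bounded weakly compact approximation property, then the
algebra `W(E)` of weakly compact operators on `E` has a bounded left approximate identity:
there is a bound `C` such that for any finitely many weakly compact operators `y` and any
`ε > 0` there is a weakly compact `x` with `‖x‖ ≤ C` and `‖y - x ∘ y‖ < ε` for all `y`. -/
theorem stmt_1 {E : Type*} [NormedAddCommGroup E] [NormedSpace ℝ E] [CompleteSpace E]
    (hWAP : ∃ C : ℝ, HasWAPWith E C) :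
    ∃ C : ℝ, ∀ Y : Finset (E →L[ℝ] E), (∀ y ∈ Y, IsWeaklyCompactOp y) →
      ∀ ε : ℝ, 0 < ε → ∃ x : E →L[ℝ] E, IsWeaklyCompactOp x ∧ ‖x‖ ≤ C ∧
        ∀ y ∈ Y, ‖y - x.comp y‖ < ε :=
  stmt_1_general hWAP
end

section
/- If a Banach space E has the W.A.P. with constant C and M ⊆ E is a closed subspace that is the range of a bounded projection P on E, then M has the W.A.P. with constant ‖P‖·C. -/
/-! Push a weakly compact `D ⊆ M` into `E`, approximate it there by `V`, and project back:
`P ∘ V` restricted to `M` is weakly compact, has norm at most `‖P‖ * C`, and for `x ∈ M`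
we have `x - P (V x) = P (x - V x)` because `P` fixes `M`. -/

open Filter Topology

section WeakCompactness

variable {E F G : Type*} [NormedAddCommGroup E] [NormedSpace ℝ E]
  [NormedAddCommGroup F] [NormedSpace ℝ F] [NormedAddCommGroup G] [NormedSpace ℝ G]

theorem toWeakSpace_image_image (f : E →L[ℝ] F) (s : Set E) :
    toWeakSpace ℝ F '' (f '' s) = WeakSpace.map f '' (toWeakSpace ℝ E '' s) := by
  rw [← Set.image_comp, ← Set.image_comp]
  rfl

theorem IsWeaklyCompact.image {D : Set E} (hD : IsWeaklyCompact D) (f : E →L[ℝ] F) :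
    IsWeaklyCompact (f '' D) := by
  rw [IsWeaklyCompact, toWeakSpace_image_image]
  exact IsCompact.image hD (WeakSpace.map f).continuous

theorem IsWeaklyCompactOp.comp_left {V : E →L[ℝ] F} (hV : IsWeaklyCompactOp V)
    (Q : F →L[ℝ] G) : IsWeaklyCompactOp (Q.comp V) := by
  have hK := hV.image (WeakSpace.map Q).continuous
  refine hK.of_isClosed_subset isClosed_closure (closure_minimal ?_ hK.isClosed)
  rw [ContinuousLinearMap.coe_comp, Set.image_comp, toWeakSpace_image_image]
  exact Set.image_mono subset_closure

theorem IsWeaklyCompactOp.comp_right {V : E →L[ℝ] F} (hV : IsWeaklyCompactOp V)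
    (S : G →L[ℝ] E) (hS : ‖S‖ ≤ 1) : IsWeaklyCompactOp (V.comp S) := by
  have hball : S '' Metric.closedBall 0 1 ⊆ Metric.closedBall 0 1 := by
    rintro _ ⟨x, hx, rfl⟩
    rw [mem_closedBall_zero_iff] at hx ⊢
    calc ‖S x‖ ≤ ‖S‖ * 1 := S.le_opNorm_of_le hx
      _ ≤ 1 := by simpa using hS
  refine hV.of_isClosed_subset isClosed_closure (closure_mono ?_)
  rw [ContinuousLinearMap.coe_comp, Set.image_comp]
  exact Set.image_mono (Set.image_mono hball)

end WeakCompactness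

theorem HasWAPWith.of_retract {E F : Type*} [NormedAddCommGroup E] [NormedSpace ℝ E]
    [NormedAddCommGroup F] [NormedSpace ℝ F] {C : ℝ} (hE : HasWAPWith E C)
    (ι : F →L[ℝ] E) (hι : ‖ι‖ ≤ 1) (Q : E →L[ℝ] F) (hQι : ∀ x, Q (ι x) = x) :
    HasWAPWith F (‖Q‖ * C) := by
  intro D hD ε hε
  obtain ⟨V, hVc, hVn, hVD⟩ := hE (ι '' D) (hD.image ι) (ε / (‖Q‖ + 1)) (by positivity)
  refine ⟨Q.comp (V.comp ι), (hVc.comp_right ι hι).comp_left Q, ?_, fun x hx => ?_⟩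
  · calc ‖Q.comp (V.comp ι)‖ ≤ ‖Q‖ * (‖V‖ * ‖ι‖) :=
          (Q.opNorm_comp_le _).trans (by gcongr; exact V.opNorm_comp_le ι)
      _ ≤ ‖Q‖ * C := by
          gcongr
          exact (mul_le_of_le_one_right (norm_nonneg V) hι).trans hVn
  · have hQ : 0 ≤ ‖Q‖ := norm_nonneg Q
    calc ‖x - Q (V (ι x))‖ = ‖Q (ι x - V (ι x))‖ := by rw [map_sub, hQι]
      _ ≤ ‖Q‖ * (ε / (‖Q‖ + 1)) := Q.le_opNorm_of_le (hVD _ ⟨x, hx, rfl⟩).le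
      _ < ε := by
          rw [mul_div_assoc', div_lt_iff₀ (by positivity)]
          nlinarith

theorem ContinuousLinearMap.norm_codRestrict {E : Type*} [NormedAddCommGroup E]
    [NormedSpace ℝ E] (P : E →L[ℝ] E) (M : Submodule ℝ E) (hP : ∀ x, P x ∈ M) :
    ‖P.codRestrict M hP‖ = ‖P‖ :=
  le_antisymm
    ((P.codRestrict M hP).opNorm_le_bound (norm_nonneg P) P.le_opNorm)
    (P.opNorm_le_bound (norm_nonneg (P.codRestrict M hP)) (P.codRestrict M hP).le_opNorm)

theorem stmt_3_general {E : Type*} [NormedAddCommGroup E] [NormedSpace ℝ E]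
    (C : ℝ) (hE : HasWAPWith E C)
    (P : E →L[ℝ] E) (hidem : P.comp P = P)
    (M : Submodule ℝ E)
    (hrange : LinearMap.range (P : E →ₗ[ℝ] E) = M) :
    HasWAPWith ↥M (‖P‖ * C) := by
  have hPM : ∀ x, P x ∈ M := fun x => hrange ▸ LinearMap.mem_range_self _ x
  have hPfix : ∀ x : M, P x = x := by
    rintro ⟨_, hx⟩
    obtain ⟨y, rfl⟩ := hrange.symm ▸ hx
    exact congrArg (· y) hidem
  rw [← P.norm_codRestrict M hPM]
  exact hE.of_retract M.subtypeL (Submodule.norm_subtypeL_le M) (P.codRestrict M hPM)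
    fun x => Subtype.ext (hPfix x)

/-- If `E` has the W.A.P. with constant `C` and `M` is the range of a bounded projection
`P` on `E`, then `M` has the W.A.P. with constant `‖P‖ * C`. -/
theorem stmt_3 {E : Type*} [NormedAddCommGroup E] [NormedSpace ℝ E] [CompleteSpace E]
    (C : ℝ) (hE : HasWAPWith E C)
    (P : E →L[ℝ] E) (hidem : P.comp P = P)
    (M : Submodule ℝ E) (hMclosed : IsClosed (M : Set E))
    (hrange : LinearMap.range (P : E →ₗ[ℝ] E) = M) :
    HasWAPWith ↥M (‖P‖ * C) :=
  stmt_3_general C hE P hidem M hrange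
end

section
/- Let (E_j) be a sequence of Banach spaces and let X = ℓ¹(E_j) be their ℓ¹-direct sum. If D ⊆ X is weakly compact, then for every δ > 0 there exists n ∈ ℕ such that sup_{y=(y_j) ∈ D} ∑_{j≥n} ‖y_j‖ ≤ δ. -/
open Filter Topology

instance : Fact ((1 : ENNReal) ≤ 1) := ⟨le_rfl⟩

/-!
A gliding hump argument. If the tails are not uniformly small, there are `v n ∈ D` with more
than `δ` of mass beyond `n`; let `y₀ ∈ D` be a weak cluster point of `(v n)`. Inductively choose
blocks `[b k, b (k + 1))` and terms `w k = v (φ k)` carrying almost all of their (more than `δ`)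
tail mass beyond `b k` inside the `k`-th block, and so close to `y₀` on the earlier blocks that
these contribute about as little to `w k` as to `y₀`. Gluing norming functionals of `w k` on the
`k`-th block gives `g` with `‖g j‖ ≤ 1`, and the weakly continuous functionals
`y ↦ ∑_{j ≥ b K} g j (y j)` are at least `δ / 2` on all `w k` with `k ≥ K`. Hence they are at
least `δ / 2` at a weak cluster point `y ∈ D` of `(w k)`, although they are bounded by the tails
of `y`, which tend to `0`.
-/

open Finset

section Shift

variable {G : Type*} [AddCommGroup G] [TopologicalSpace G] [IsTopologicalAddGroup G] {f : ℕ → G}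

theorem Summable.comp_add_left (hf : Summable f) (a : ℕ) : Summable fun j => f (a + j) := by
  simpa only [add_comm a] using (summable_nat_add_iff a).2 hf

theorem Summable.tsum_add_left_eq_sum_Ico_add [T2Space G] (hf : Summable f) {a c : ℕ}
    (h : a ≤ c) :
    ∑' j, f (a + j) = ∑ j ∈ Ico a c, f j + ∑' j, f (c + j) := by
  rw [← (hf.comp_add_left a).sum_add_tsum_nat_add (c - a), sum_Ico_eq_sum_range]
  congr 2 with j
  rw [add_comm j, ← add_assoc, Nat.add_sub_cancel' h]

end Shift

section TailNorm

variable {E : ℕ → Type*} [∀ j, NormedAddCommGroup (E j)]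

theorem lp.summable_norm (y : lp E 1) : Summable fun j => ‖y j‖ := by
  simpa using (lp.memℓp y).summable (p := 1) (by norm_num)

noncomputable def tailNorm (y : lp E 1) (n : ℕ) : ℝ := ∑' j, ‖y (n + j)‖

theorem tailNorm_zero (y : lp E 1) : tailNorm y 0 = ‖y‖ := by
  rw [tailNorm, tsum_congr fun j => by rw [zero_add]]
  simpa using (lp.norm_eq_tsum_rpow (p := 1) (by norm_num) y).symm

theorem tailNorm_eq_sum_Ico_add (y : lp E 1) {a c : ℕ} (h : a ≤ c) :
    tailNorm y a = ∑ j ∈ Ico a c, ‖y j‖ + tailNorm y c :=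
  (lp.summable_norm y).tsum_add_left_eq_sum_Ico_add h

theorem tailNorm_antitone (y : lp E 1) : Antitone (tailNorm y) := fun a c h => by
  rw [tailNorm_eq_sum_Ico_add y h]
  exact le_add_of_nonneg_left (sum_nonneg fun _ _ => norm_nonneg _)

theorem tendsto_tailNorm_atTop (y : lp E 1) : Tendsto (tailNorm y) atTop (𝓝 0) := by
  refine (tendsto_sum_nat_add fun j => ‖y j‖).congr fun n => tsum_congr fun j => ?_
  rw [add_comm]

end TailNorm

section TailPairing

variable {E : ℕ → Type*} [∀ j, NormedAddCommGroup (E j)] [∀ j, NormedSpace ℝ (E j)]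
  {G : ∀ j, E j →L[ℝ] ℝ}

theorem summable_apply_of_norm_le_one (hG : ∀ j, ‖G j‖ ≤ 1) (y : lp E 1) :
    Summable fun j => G j (y j) :=
  (lp.summable_norm y).of_norm_bounded fun j =>
    ((G j).le_of_opNorm_le (hG j) _).trans_eq (one_mul _)

theorem norm_tsum_apply_le_tailNorm (hG : ∀ j, ‖G j‖ ≤ 1) (y : lp E 1) (a : ℕ) :
    ‖∑' j, G (a + j) (y (a + j))‖ ≤ tailNorm y a :=
  tsum_of_norm_bounded ((lp.summable_norm y).comp_add_left a).hasSum fun _ =>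
    ((G _).le_of_opNorm_le (hG _) _).trans_eq (one_mul _)

noncomputable def tailPairing (G : ∀ j, E j →L[ℝ] ℝ) (hG : ∀ j, ‖G j‖ ≤ 1) (a : ℕ) :
    lp E 1 →L[ℝ] ℝ :=
  LinearMap.mkContinuous
    { toFun := fun y => ∑' j, G (a + j) (y (a + j))
      map_add' := fun y z => by
        simp only [lp.coeFn_add, Pi.add_apply, map_add]
        exact ((summable_apply_of_norm_le_one hG y).comp_add_left a).tsum_add
          ((summable_apply_of_norm_le_one hG z).comp_add_left a)
      map_smul' := fun c y => by
        simp only [lp.coeFn_smul, Pi.smul_apply, map_smul, smul_eq_mul, RingHom.id_apply]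
        exact tsum_mul_left }
    1 fun y => by
      simpa only [LinearMap.coe_mk, AddHom.coe_mk, Real.norm_eq_abs, one_mul, tailNorm_zero] using
        (norm_tsum_apply_le_tailNorm hG y a).trans (tailNorm_antitone y (Nat.zero_le a))

theorem abs_tailPairing_le (hG : ∀ j, ‖G j‖ ≤ 1) (a : ℕ) (y : lp E 1) :
    |tailPairing G hG a y| ≤ tailNorm y a :=
  norm_tsum_apply_le_tailNorm hG y a

theorem tailPairing_eq_sum_Ico_add (hG : ∀ j, ‖G j‖ ≤ 1) (y : lp E 1) {a c : ℕ} (h : a ≤ c) :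
    tailPairing G hG a y = ∑ j ∈ Ico a c, G j (y j) + tailPairing G hG c y :=
  (summable_apply_of_norm_le_one hG y).tsum_add_left_eq_sum_Ico_add h

theorem tailNorm_sub_le_tailPairing (hG : ∀ j, ‖G j‖ ≤ 1) {y y₀ : lp E 1} {a b c : ℕ}
    (hab : a ≤ b) (hbc : b ≤ c) (hnorm : ∀ j ∈ Ico b c, G j (y j) = ‖y j‖) :
    tailNorm y b - 2 * tailNorm y c - 2 * tailNorm y₀ a
      - |∑ j ∈ Ico a b, G j (y j) - ∑ j ∈ Ico a b, G j (y₀ j)| ≤ tailPairing G hG a y := by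
  have hbump : ∑ j ∈ Ico b c, G j (y j) = tailNorm y b - tailNorm y c := by
    rw [sum_congr rfl hnorm, tailNorm_eq_sum_Ico_add y hbc, add_sub_cancel_right]
  have hsplit_ab := tailPairing_eq_sum_Ico_add hG y hab
  have hsplit_bc := tailPairing_eq_sum_Ico_add hG y hbc
  have hsplit_y₀ := tailPairing_eq_sum_Ico_add hG y₀ hab
  have htail_c := abs_le.1 (abs_tailPairing_le hG c y)
  have htail_a₀ := abs_le.1 (abs_tailPairing_le hG a y₀)
  have htail_b₀ := abs_le.1 (abs_tailPairing_le hG b y₀)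
  have hanti₀ := tailNorm_antitone y₀ hab
  have hclose := neg_abs_le (∑ j ∈ Ico a b, G j (y j) - ∑ j ∈ Ico a b, G j (y₀ j))
  linarith

end TailPairing

section WeakClusterPt

theorem MapClusterPt.frequently_forall_abs_sub_lt {X β ι : Type*} [TopologicalSpace X] [Finite ι]
    {x : X} {l : Filter β} {u : β → X} (h : MapClusterPt x l u) {f : ι → X → ℝ}
    (hf : ∀ i, Continuous (f i)) {ε : ℝ} (hε : 0 < ε) :
    ∃ᶠ n in l, ∀ i, |f i (u n) - f i x| < ε := by
  have := Fintype.ofFinite ι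
  refine ((h.continuousAt_comp (continuous_pi hf).continuousAt).frequently
    (Metric.ball_mem_nhds _ hε)).mono fun n hn => ?_
  simpa only [Metric.mem_ball, dist_pi_lt_iff hε, Real.dist_eq, Function.comp_apply] using hn

variable {𝕜 X : Type*} [CommSemiring 𝕜] [TopologicalSpace 𝕜] [ContinuousAdd 𝕜]
  [ContinuousConstSMul 𝕜 𝕜] [AddCommMonoid X] [Module 𝕜 X] [TopologicalSpace X]

theorem StrongDual.continuous_comp_toWeakSpace_symm (f : StrongDual 𝕜 X) :
    Continuous fun x : WeakSpace 𝕜 X => f ((toWeakSpace 𝕜 X).symm x) :=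
  WeakBilin.eval_continuous _ f

end WeakClusterPt

theorem IsWeaklyCompact.exists_mapClusterPt {X : Type*} [NormedAddCommGroup X] [NormedSpace ℝ X]
    {D : Set X} (hD : IsWeaklyCompact D) {v : ℕ → X} (hv : ∀ n, v n ∈ D) :
    ∃ y ∈ D, MapClusterPt (toWeakSpace ℝ X y) atTop (toWeakSpace ℝ X ∘ v) := by
  obtain ⟨_, ⟨y, hy, rfl⟩, h⟩ :=
    IsCompact.exists_mapClusterPt (f := atTop) (u := toWeakSpace ℝ X ∘ v) hD
      (tendsto_principal.2 (Eventually.of_forall fun n => Set.mem_image_of_mem _ (hv n)))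
  exact ⟨y, hy, h⟩

theorem exists_forall_lt_eq_of_succ_eq {F : ℕ → Type*} {b : ℕ → ℕ} (hb : StrictMono b)
    {G : ℕ → ∀ j, F j} (hG : ∀ k, ∀ j < b k, G (k + 1) j = G k j) :
    ∃ g : ∀ j, F j, ∀ k, ∀ j < b k, g j = G k j := by
  have stable : ∀ k m, k ≤ m → ∀ j < b k, G m j = G k j := by
    intro k m hkm j hj
    induction m, hkm using Nat.le_induction with
    | base => rfl
    | succ m hkm ih => rw [hG m j (hj.trans_le (hb.monotone hkm)), ih]
  refine ⟨fun j => G (j + 1) j, fun k j hj => ?_⟩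
  have hj' : j < b (j + 1) := Nat.lt_of_succ_le (hb.id_le _)
  show G (j + 1) j = G k j
  rw [← stable (j + 1) (max k (j + 1)) (le_max_right _ _) j hj',
    stable k (max k (j + 1)) (le_max_left _ _) j hj]

section NormingFunctional

variable {F : Type*} [NormedAddCommGroup F] [NormedSpace ℝ F]

noncomputable def normingFunctional (x : F) : StrongDual ℝ F :=
  (exists_dual_vector'' ℝ x).choose

theorem norm_normingFunctional_le (x : F) : ‖normingFunctional x‖ ≤ 1 :=
  (exists_dual_vector'' ℝ x).choose_spec.1

theorem normingFunctional_apply_self (x : F) : normingFunctional x x = ‖x‖ :=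
  (exists_dual_vector'' ℝ x).choose_spec.2

end NormingFunctional

section GlidingHump

variable {E : ℕ → Type*} [∀ j, NormedAddCommGroup (E j)] [∀ j, NormedSpace ℝ (E j)]
  {v : ℕ → lp E 1} {y₀ : lp E 1} {ε : ℝ}

theorem exists_next_hump
    (hcl : MapClusterPt (toWeakSpace ℝ (lp E 1) y₀) atTop (toWeakSpace ℝ (lp E 1) ∘ v))
    (hε : 0 < ε) (b : ℕ) (G : ∀ j, E j →L[ℝ] ℝ) :
    ∃ n B, b ≤ n ∧ b < B ∧ tailNorm (v n) B < ε ∧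
      ∀ a ≤ b, |∑ j ∈ Ico a b, G j (v n j) - ∑ j ∈ Ico a b, G j (y₀ j)| < ε := by
  let f : Fin (b + 1) → StrongDual ℝ (lp E 1) := fun a =>
    ∑ j ∈ Ico (a : ℕ) b, (G j).comp (lp.evalCLM ℝ E 1 j)
  obtain ⟨n, hclose, hbn⟩ := ((hcl.frequently_forall_abs_sub_lt
    (fun a => (f a).continuous_comp_toWeakSpace_symm) hε).and_eventually
    (eventually_ge_atTop b)).exists
  obtain ⟨B, hB, hbB⟩ := (((tendsto_tailNorm_atTop (v n)).eventually_lt_const hε).and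
    (eventually_gt_atTop b)).exists
  refine ⟨n, B, hbn, hbB, hB, fun a ha => ?_⟩
  have := hclose ⟨a, Nat.lt_succ_of_le ha⟩
  simp only [f, _root_.sum_apply, ContinuousLinearMap.comp_apply] at this
  exact this

theorem exists_gliding_hump
    (hcl : MapClusterPt (toWeakSpace ℝ (lp E 1) y₀) atTop (toWeakSpace ℝ (lp E 1) ∘ v))
    (hε : 0 < ε) (n₀ : ℕ) :
    ∃ (φ b : ℕ → ℕ) (g : ∀ j, E j →L[ℝ] ℝ), (∀ j, ‖g j‖ ≤ 1) ∧ StrictMono b ∧ b 0 = n₀ ∧ ∀ k,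
      b k ≤ φ k ∧ tailNorm (v (φ k)) (b (k + 1)) < ε ∧
      (∀ j ∈ Ico (b k) (b (k + 1)), g j (v (φ k) j) = ‖v (φ k) j‖) ∧
      ∀ a ≤ b k, |∑ j ∈ Ico a (b k), g j (v (φ k) j) - ∑ j ∈ Ico a (b k), g j (y₀ j)| < ε := by
  choose n B hn using exists_next_hump hcl hε
  -- The state `(b, G)` is the start of the next hump and the functionals fixed below it; closeness
  -- to `y₀` is asked for every start point `a ≤ b`, so earlier block boundaries need no record.
  let next : ℕ × (∀ j, E j →L[ℝ] ℝ) → ℕ × (∀ j, E j →L[ℝ] ℝ) := fun s =>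
    (B s.1 s.2, fun j => if j < s.1 then s.2 j else normingFunctional (v (n s.1 s.2) j))
  let s : ℕ → ℕ × (∀ j, E j →L[ℝ] ℝ) := fun k => next^[k] (n₀, 0)
  have hs : ∀ k, s (k + 1) = next (s k) := fun k => Function.iterate_succ_apply' _ _ _
  have hb : StrictMono fun k => (s k).1 :=
    strictMono_nat_of_lt_succ fun k => by rw [hs]; exact (hn _ _).2.1
  have hG : ∀ k j, ‖(s k).2 j‖ ≤ 1 := by
    intro k j
    induction k with
    | zero => simp [s]
    | succ k ih =>
      rw [hs]
      dsimp only [next]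
      split_ifs
      exacts [ih, norm_normingFunctional_le _]
  obtain ⟨g, hg⟩ := exists_forall_lt_eq_of_succ_eq hb (G := fun k => (s k).2) fun k j hj => by
    rw [hs]; exact if_pos hj
  refine ⟨fun k => n (s k).1 (s k).2, fun k => (s k).1, g,
    fun j => by rw [hg (j + 1) j (Nat.lt_of_succ_le (hb.id_le _))]; exact hG _ _, hb, rfl,
    fun k => ?_⟩
  obtain ⟨hbn, -, htail, hclose⟩ := hn (s k).1 (s k).2
  refine ⟨hbn, by beta_reduce; rwa [hs], fun j hj => ?_, fun a ha => ?_⟩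
  · rw [mem_Ico] at hj
    rw [hg (k + 1) j hj.2, hs]
    dsimp only [next]
    rw [if_neg hj.1.not_gt, normingFunctional_apply_self]
  · have hgs : ∀ y : lp E 1,
        ∑ j ∈ Ico a (s k).1, g j (y j) = ∑ j ∈ Ico a (s k).1, (s k).2 j (y j) :=
      fun y => sum_congr rfl fun j hj => by rw [hg k j (mem_Ico.1 hj).2]
    rw [hgs, hgs]
    exact hclose a ha

end GlidingHump

theorem stmt_4_general {E : ℕ → Type*} [∀ j, NormedAddCommGroup (E j)] [∀ j, NormedSpace ℝ (E j)]
    (D : Set (lp E 1)) (hD : IsWeaklyCompact D) :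
    ∀ δ : ℝ, 0 < δ → ∃ n : ℕ, ∀ y ∈ D, ∑' j : ℕ, ‖(y : ∀ j, E j) (n + j)‖ ≤ δ := by
  intro δ hδ
  by_contra! hcon
  choose v hvD hv using hcon
  obtain ⟨y₀, -, hy₀⟩ := hD.exists_mapClusterPt hvD
  obtain ⟨n₀, hn₀⟩ :=
    ((tendsto_tailNorm_atTop y₀).eventually_lt_const (by positivity : 0 < δ / 16)).exists
  obtain ⟨φ, b, g, hg, hb, hb0, hump⟩ := exists_gliding_hump hy₀ (by positivity : 0 < δ / 8) n₀
  obtain ⟨y, -, hy⟩ := hD.exists_mapClusterPt fun k => hvD (φ k)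
  obtain ⟨K, hK : tailNorm y (b K) < δ / 2⟩ :=
    (((tendsto_tailNorm_atTop y).comp hb.tendsto_atTop).eventually_lt_const
      (by positivity : 0 < δ / 2)).exists
  have hlarge : ∀ k ≥ K, δ / 2 ≤ tailPairing g hg (b K) (v (φ k)) := by
    intro k hk
    obtain ⟨hbφ, htail, hnorm, hclose⟩ := hump k
    have hlow := tailNorm_sub_le_tailPairing hg (y₀ := y₀) (hb.monotone hk)
      (hb.monotone k.le_succ) hnorm
    have hnear := hclose (b K) (hb.monotone hk)
    have hmass : δ < tailNorm (v (φ k)) (b k) := (hv (φ k)).trans_le (tailNorm_antitone _ hbφ)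
    have hsmall := tailNorm_antitone y₀ (hb0 ▸ hb.monotone K.zero_le)
    linarith
  have hcl := hy.continuousAt_comp
    (StrongDual.continuous_comp_toWeakSpace_symm (tailPairing g hg (b K))).continuousAt
  have hmem : tailPairing g hg (b K) y ∈ Set.Ici (δ / 2) :=
    isClosed_Ici.mem_of_mapClusterPt hcl (eventually_atTop.2 ⟨K, hlarge⟩)
  linarith [abs_le.1 (abs_tailPairing_le hg (b K) y), Set.mem_Ici.1 hmem]

/-- If `D` is a weakly compact subset of the `ℓ¹`-direct sum `ℓ¹(E_j)`, then for every
`δ > 0` there is `n` such that the tails satisfy `∑_{j ≥ n} ‖y_j‖ ≤ δ` uniformly on `D`. -/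
theorem stmt_4 {E : ℕ → Type*} [∀ j, NormedAddCommGroup (E j)] [∀ j, NormedSpace ℝ (E j)]
    [∀ j, CompleteSpace (E j)]
    (D : Set (lp E 1)) (hD : IsWeaklyCompact D) :
    ∀ δ : ℝ, 0 < δ → ∃ n : ℕ, ∀ y ∈ D, ∑' j : ℕ, ‖(y : ∀ j, E j) (n + j)‖ ≤ δ :=
  stmt_4_general D hD
end

section
/- Let E be a Banach space with the Dunford–Pettis property. If E has the bounded weakly compact approximation property, then E has the Schur property. -/
open Filter Topology

/-- A sequence is weakly null if it tends to `0` in the weak topology. -/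
def WeaklyNull {E : Type*} [NormedAddCommGroup E] [NormedSpace ℝ E] (x : ℕ → E) : Prop :=
  Tendsto (fun n => toWeakSpace ℝ E (x n)) atTop (nhds 0)

/-- `E` has the Dunford–Pettis property: weakly compact operators out of `E` map weakly
null sequences to norm-null sequences. -/
def HasDPP (E : Type) [NormedAddCommGroup E] [NormedSpace ℝ E] : Prop :=
  ∀ (F : Type) (_ : NormedAddCommGroup F), ∀ (_ : NormedSpace ℝ F) (_ : CompleteSpace F),
    ∀ V : E →L[ℝ] F, IsWeaklyCompactOp V →
      ∀ x : ℕ → E, WeaklyNull x → Tendsto (fun n => ‖V (x n)‖) atTop (nhds 0)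

/-- `E` has the Schur property: weakly null sequences are norm null. -/
def HasSchur (E : Type) [NormedAddCommGroup E] [NormedSpace ℝ E] : Prop :=
  ∀ x : ℕ → E, WeaklyNull x → Tendsto (fun n => ‖x n‖) atTop (nhds 0)

/-! Given a weakly null sequence `(xₙ)`, the set `{0} ∪ {xₙ}` is weakly compact, so the W.A.P.
yields weakly compact operators `V` with `‖xₙ - V xₙ‖ < ε` for all `n`. By the Dunford–Pettis
property `‖V xₙ‖ → 0`, hence `limsup ‖xₙ‖ ≤ ε` for every `ε > 0`. -/

theorem tendsto_norm_zero_of_forall_eventually_norm_sub_lt {ι E : Type*} [SeminormedAddGroup E]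
    {l : Filter ι} {x : ι → E}
    (h : ∀ ε > 0, ∃ y : ι → E, Tendsto (fun i => ‖y i‖) l (𝓝 0) ∧ ∀ᶠ i in l, ‖x i - y i‖ < ε) :
    Tendsto (fun i => ‖x i‖) l (𝓝 0) := by
  rw [Metric.tendsto_nhds]
  intro ε hε
  obtain ⟨y, hy, hxy⟩ := h (ε / 2) (half_pos hε)
  filter_upwards [hy.eventually_lt_const (half_pos hε), hxy] with i hyi hxyi
  rw [Real.dist_0_eq_abs, abs_norm]
  linarith [norm_le_norm_add_norm_sub' (x i) (y i)]

theorem WeaklyNull.isWeaklyCompact_insert_range {E : Type*} [NormedAddCommGroup E]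
    [NormedSpace ℝ E] {x : ℕ → E} (hx : WeaklyNull x) :
    IsWeaklyCompact (insert 0 (Set.range x)) := by
  have himage : toWeakSpace ℝ E '' insert 0 (Set.range x) =
      insert 0 (Set.range fun n => toWeakSpace ℝ E (x n)) := by
    rw [Set.image_insert_eq, ← Set.range_comp, map_zero]
    rfl
  rw [IsWeaklyCompact, himage]
  exact hx.isCompact_insert_range

/-- If a Banach space with the Dunford–Pettis property has the bounded weakly compact
approximation property, then it has the Schur property. -/
theorem stmt_8 {E : Type} [NormedAddCommGroup E] [NormedSpace ℝ E] [CompleteSpace E]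
    (hDPP : HasDPP E) (hWAP : ∃ C : ℝ, HasWAPWith E C) :
    HasSchur E := by
  intro x hx
  obtain ⟨C, hC⟩ := hWAP
  refine tendsto_norm_zero_of_forall_eventually_norm_sub_lt fun ε hε => ?_
  obtain ⟨V, hV, -, hVx⟩ := hC _ hx.isWeaklyCompact_insert_range ε hε
  exact ⟨fun n => V (x n), hDPP E inferInstance inferInstance inferInstance V hV x hx,
    Eventually.of_forall fun n => hVx _ (Set.mem_insert_of_mem _ ⟨n, rfl⟩)⟩
end

section
/- Let E be a Banach space with the Dunford–Pettis property and suppose E contains an infinite-dimensional reflexive closed subspace M. Then E fails to have the weakly compact approximation property (even the unbounded one): there exists a weakly compact set D ⊆ E and ε > 0 such that no weakly compact operator V : E → E satisfies sup_{x∈D} ‖x − Vx‖ < ε. -/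
/-!
Take for `D` the unit ball of `M` and `ε = 1/12`. Riesz's lemma gives a `1/2`-separated sequence
in `D`; since `D` is weakly compact it has a weakly convergent subsequence `xₙ ⇀ a`. If a weakly
compact `V` satisfied `‖x - Vx‖ < ε` on `D`, the Dunford–Pettis property would give
`‖V(xₙ - a)‖ → 0`, hence `‖xₙ - a‖ < 3ε = 1/4` eventually, contradicting the separation.
-/

open Filter Topology

theorem IsCompact.isSeqCompact_of_separating {X ι : Type*} {Y : ι → Type*} [TopologicalSpace X]
    [Countable ι] [∀ i, MetricSpace (Y i)] {K : Set X} (hK : IsCompact K) (f : ∀ i, X → Y i)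
    (hf : ∀ i, Continuous (f i)) (hsep : ∀ x ∈ K, ∀ y ∈ K, (∀ i, f i x = f i y) → x = y) :
    IsSeqCompact K := by
  have : CompactSpace K := isCompact_iff_compactSpace.mp hK
  have : Encodable ι := Encodable.ofCountable ι
  have := Metric.PiNatEmbed.TopologicalSpace.MetrizableSpace.of_countable_separating
    (fun i (x : K) => f i x) (fun i => (hf i).comp continuous_subtype_val) fun x y hxy => by
      by_contra! h
      exact hxy (Subtype.ext (hsep x x.2 y y.2 h))
  exact isSeqCompact_iff_seqCompactSpace.mpr inferInstance

theorem TopologicalSpace.IsSeparable.exists_seq_dual_separating {𝕜 E : Type*} [RCLike 𝕜]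
    [NormedAddCommGroup E] [NormedSpace 𝕜 E] {s : Set E} (hs : IsSeparable s) :
    ∃ g : ℕ → StrongDual 𝕜 E, ∀ x ∈ s, (∀ n, g n x = 0) → x = 0 := by
  obtain ⟨c, hc, hsc⟩ := hs
  rcases c.eq_empty_or_nonempty with rfl | hne
  · exact ⟨0, fun x hx => by simpa using hsc hx⟩
  obtain ⟨u, rfl⟩ := hc.exists_eq_range hne
  choose g hg_norm hg_eq using fun n => exists_dual_vector'' 𝕜 (u n)
  refine ⟨g, fun x hx hgx => norm_le_zero_iff.mp (le_of_forall_pos_le_add fun δ hδ => ?_)⟩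
  obtain ⟨_, ⟨n, rfl⟩, hxu⟩ := Metric.mem_closure_iff.mp (hsc hx) (δ / 2) (by positivity)
  rw [dist_eq_norm] at hxu
  have hu : ‖u n‖ ≤ ‖x - u n‖ := by
    calc ‖u n‖ = ‖g n (u n - x)‖ := by simp [map_sub, hgx, hg_eq]
      _ ≤ ‖g n‖ * ‖u n - x‖ := (g n).le_opNorm _
      _ ≤ ‖x - u n‖ := by
        rw [norm_sub_rev]; exact mul_le_of_le_one_left (norm_nonneg _) (hg_norm n)
  linarith [norm_le_norm_sub_add x (u n)]

theorem Convex.isClosed_toWeakSpace_image {E : Type*} [NormedAddCommGroup E] [NormedSpace ℝ E]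
    {s : Set E} (hs : Convex ℝ s) (hc : IsClosed s) : IsClosed (toWeakSpace ℝ E '' s) := by
  rw [← hc.closure_eq, hs.toWeakSpace_closure ℝ]
  exact isClosed_closure

section WeakSequences

variable {E : Type*} [NormedAddCommGroup E] [NormedSpace ℝ E]

/-- The sequential half of Eberlein–Šmulian: on the closed span `N` of the sequence, which is
separable, countably many functionals separate points, so the weak topology on the compact set
`D ∩ N` is metrizable. -/
theorem IsWeaklyCompact.exists_tendsto_subseq {D : Set E} (hD : IsWeaklyCompact D) {x : ℕ → E}
    (hx : ∀ n, x n ∈ D) : ∃ a ∈ D, ∃ φ : ℕ → ℕ, StrictMono φ ∧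
      Tendsto (fun n => toWeakSpace ℝ E (x (φ n))) atTop (𝓝 (toWeakSpace ℝ E a)) := by
  set N := (Submodule.span ℝ (Set.range x)).topologicalClosure
  have hN_sep : TopologicalSpace.IsSeparable (N : Set E) := by
    rw [Submodule.topologicalClosure_coe]
    exact (Set.countable_range x).isSeparable.span.closure
  obtain ⟨g, hg⟩ := hN_sep.exists_seq_dual_separating (𝕜 := ℝ)
  have hK : IsCompact (toWeakSpace ℝ E '' (D ∩ N)) := by
    rw [Set.image_inter (toWeakSpace ℝ E).injective]
    exact hD.inter_right <|
      N.convex.isClosed_toWeakSpace_image (Submodule.isClosed_topologicalClosure _)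
  have hK_seq := hK.isSeqCompact_of_separating (fun n w => (topDualPairing ℝ E).flip w (g n))
    (fun n => WeakBilin.eval_continuous _ (g n)) <| by
      rintro _ ⟨a, ⟨-, haN⟩, rfl⟩ _ ⟨b, ⟨-, hbN⟩, rfl⟩ hab
      have := hg (a - b) (N.sub_mem haN hbN) fun n => by
        rw [map_sub]; exact sub_eq_zero.mpr (hab n)
      rw [sub_eq_zero.mp this]
  have hxN (n : ℕ) : x n ∈ N := Submodule.le_topologicalClosure _ (Submodule.subset_span ⟨n, rfl⟩)
  obtain ⟨_, ⟨a, ⟨haD, -⟩, rfl⟩, φ, hφ, hlim⟩ :=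
    hK_seq (x := fun n => toWeakSpace ℝ E (x n)) fun n => ⟨x n, ⟨hx n, hxN n⟩, rfl⟩
  exact ⟨a, haD, φ, hφ, hlim⟩

theorem weaklyNull_sub_of_tendsto {x : ℕ → E} {a : E}
    (h : Tendsto (fun n => toWeakSpace ℝ E (x n)) atTop (𝓝 (toWeakSpace ℝ E a))) :
    WeaklyNull fun n => x n - a := by
  simpa only [WeaklyNull, map_sub] using tendsto_sub_nhds_zero_iff.mpr h

end WeakSequences

theorem exists_seq_norm_le_one_pairwise_half_le_norm_sub {𝕜 F : Type*} [RCLike 𝕜]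
    [NormedAddCommGroup F] [NormedSpace 𝕜 F] (h : ¬FiniteDimensional 𝕜 F) :
    ∃ f : ℕ → F, (∀ n, ‖f n‖ ≤ 1) ∧ Pairwise fun m n => 1 / 2 ≤ ‖f m - f n‖ := by
  have hc : ‖(3 / 2 : 𝕜)‖ = 3 / 2 := by
    rw [norm_div, RCLike.norm_ofNat, RCLike.norm_ofNat]
  obtain ⟨f, hf_norm, hf_sep⟩ :=
    exists_seq_norm_le_one_le_norm_sub' (by rw [hc]; norm_num)
      (by rw [hc]; norm_num : ‖(3 / 2 : 𝕜)‖ < 2) h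
  refine ⟨fun n => (2⁻¹ : 𝕜) • f n, fun n => ?_, fun m n hmn => ?_⟩
  · rw [norm_smul, norm_inv, RCLike.norm_ofNat]
    linarith [hf_norm n]
  · dsimp only
    rw [← smul_sub, norm_smul, norm_inv, RCLike.norm_ofNat]
    linarith [hf_sep hmn]

theorem eventually_norm_sub_lt_of_tendsto_norm_map_sub {E : Type*} [NormedAddCommGroup E]
    [NormedSpace ℝ E] {V : E →L[ℝ] E} {x : ℕ → E} {a : E} {ε : ℝ}
    (hV : Tendsto (fun n => ‖V (x n - a)‖) atTop (𝓝 0)) (hx : ∀ n, ‖x n - V (x n)‖ < ε)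
    (ha : ‖a - V a‖ < ε) : ∀ᶠ n in atTop, ‖x n - a‖ < 3 * ε := by
  filter_upwards [hV.eventually_lt_const (by linarith [norm_nonneg (a - V a)] : 0 < ε)] with n hn
  calc ‖x n - a‖ = ‖(x n - V (x n)) + (V a - a) + V (x n - a)‖ := by rw [map_sub]; abel_nf
    _ ≤ ‖x n - V (x n)‖ + ‖V a - a‖ + ‖V (x n - a)‖ := norm_add₃_le
    _ < 3 * ε := by rw [norm_sub_rev (V a)]; linarith [hx n]

theorem Pairwise.not_eventually_dist_lt_half {X : Type*} [PseudoMetricSpace X] {x : ℕ → X}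
    {δ : ℝ} (hsep : Pairwise fun m n => δ ≤ dist (x m) (x n)) (a : X) :
    ¬∀ᶠ n in atTop, dist (x n) a < δ / 2 := by
  intro h
  obtain ⟨N, hN⟩ := eventually_atTop.mp h
  have := dist_triangle_right (x N) (x (N + 1)) a
  linarith [hsep (Nat.ne_add_one N), hN N le_rfl, hN (N + 1) N.le_succ]

theorem stmt_9_general {E : Type} [NormedAddCommGroup E] [NormedSpace ℝ E] [CompleteSpace E]
    (hDPP : HasDPP E)
    (M : Submodule ℝ E)
    (hMinf : ¬ FiniteDimensional ℝ M)
    (hMrefl : IsWeaklyCompact {x : E | x ∈ M ∧ ‖x‖ ≤ 1}) :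
    ∃ D : Set E, IsWeaklyCompact D ∧ ∃ ε : ℝ, 0 < ε ∧
      ∀ V : E →L[ℝ] E, IsWeaklyCompactOp V → ∃ x ∈ D, ε ≤ ‖x - V x‖ := by
  obtain ⟨f, hf_norm, hf_sep⟩ := exists_seq_norm_le_one_pairwise_half_le_norm_sub hMinf
  refine ⟨_, hMrefl, 1 / 12, by norm_num, fun V hV => ?_⟩
  by_contra! hV_approx
  have hfD (n : ℕ) : (f n : E) ∈ {x : E | x ∈ M ∧ ‖x‖ ≤ 1} := ⟨(f n).2, hf_norm n⟩
  obtain ⟨a, haD, φ, hφ, hlim⟩ := hMrefl.exists_tendsto_subseq hfD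
  have hVnull :=
    hDPP E inferInstance inferInstance inferInstance V hV _ (weaklyNull_sub_of_tendsto hlim)
  have hclose := eventually_norm_sub_lt_of_tendsto_norm_map_sub hVnull
    (fun n => hV_approx _ (hfD (φ n))) (hV_approx a haD)
  have hsep : Pairwise fun m n => 1 / 2 ≤ dist (f (φ m) : E) (f (φ n)) := fun m n hmn => by
    simpa [dist_eq_norm] using hf_sep (hφ.injective.ne hmn)
  exact hsep.not_eventually_dist_lt_half a <| hclose.mono fun n hn => by
    rw [dist_eq_norm]; linarith

/-- If `E` is a Banach space with the Dunford–Pettis property containing an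
infinite-dimensional reflexive closed subspace `M` (its unit ball is weakly compact),
then `E` fails the weakly compact approximation property, even without a uniform bound:
there is a weakly compact set `D` and `ε > 0` such that no weakly compact operator `V`
on `E` satisfies `sup_{x ∈ D} ‖x - Vx‖ < ε`. -/
theorem stmt_9 {E : Type} [NormedAddCommGroup E] [NormedSpace ℝ E] [CompleteSpace E]
    (hDPP : HasDPP E)
    (M : Submodule ℝ E) (hMclosed : IsClosed (M : Set E))
    (hMinf : ¬ FiniteDimensional ℝ M)
    (hMrefl : IsWeaklyCompact {x : E | x ∈ M ∧ ‖x‖ ≤ 1}) :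
    ∃ D : Set E, IsWeaklyCompact D ∧ ∃ ε : ℝ, 0 < ε ∧
      ∀ V : E →L[ℝ] E, IsWeaklyCompactOp V → ∃ x ∈ D, ε ≤ ‖x - V x‖ :=
  stmt_9_general hDPP M hMinf hMrefl
end

section
/- (Pták's combinatorial lemma) Let 0 < δ < 1 and let 𝓕 be a collection of non-empty finite subsets of ℕ such that: (i) B ∈ 𝓕 whenever ∅ ≠ B ⊆ A and A ∈ 𝓕; (ii) for every k ∈ ℕ and every (α_1,…,α_k) with α_r ≥ 0 and ∑_r α_r = 1, there exists A ∈ 𝓕 with ∑_{j∈A} α_j ≥ δ. Then there is an infinite subset M ⊆ ℕ such that every non-empty finite subset of M belongs to 𝓕. -/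
/-!
Encode subsets of `ℕ` as points of Cantor space `ℕ → Bool`. Separating, in `ℝᵏ`, the convex hull
of the indicator vectors of members of `𝓕` from the orthant `{c | ∀ j, δ ≤ c j}` turns hypothesis
(ii) into a probability measure carried by the closed set of points all of whose nonempty finite
subsets of the support lie in `𝓕`, and giving each clopen cylinder `{x | x j = true}`, `j ≤ k`,
mass at least `δ`. A weak limit of these measures (Cantor space is compact) keeps both properties.
The points lying in infinitely many cylinders then have mass at least `δ > 0`, so one of them lies
in the closed set, and its support is the required `M`.
-/

open Set Filter Topology MeasureTheory
open scoped ENNReal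

theorem LinearMap.apply_eq_dotProduct_single {ι : Type*} [Fintype ι] [DecidableEq ι]
    (f : (ι → ℝ) →ₗ[ℝ] ℝ) (x : ι → ℝ) : f x = (fun i => f (Pi.single i 1)) ⬝ᵥ x := by
  rw [f.pi_apply_eq_sum_univ x, dotProduct]
  refine Finset.sum_congr rfl fun i _ => ?_
  have : (fun j => if i = j then (1 : ℝ) else 0) = Pi.single i 1 := by
    ext j
    simp [Pi.single_apply, eq_comm]
  rw [this, smul_eq_mul, mul_comm]

theorem LinearMap.apply_single_nonneg_of_forall_pi_Ici_lt {ι : Type*} [DecidableEq ι]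
    (f : (ι → ℝ) →ₗ[ℝ] ℝ) {δ v : ℝ} (hf : ∀ b ∈ univ.pi fun _ => Ici δ, v < f b) (i : ι) :
    0 ≤ f (Pi.single i 1) := by
  by_contra! hi
  have hδ : (fun _ => δ) ∈ univ.pi fun (_ : ι) => Ici δ := fun _ _ => mem_Ici.2 le_rfl
  -- moving from the constant `δ` in direction `eᵢ` stays in the orthant but drives `f` down to `v`
  obtain ⟨r, hr, hrf⟩ : ∃ r : ℝ, 0 ≤ r ∧ r * f (Pi.single i 1) = v - f (fun _ => δ) :=
    ⟨(f (fun _ => δ) - v) / -f (Pi.single i 1), div_nonneg (by linarith [hf _ hδ]) (by linarith),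
      by rw [div_neg, neg_mul, div_mul_cancel₀ _ hi.ne]; ring⟩
  have hmem : (fun _ => δ) + r • Pi.single i 1 ∈ univ.pi fun (_ : ι) => Ici δ := fun j _ => by
    have : (0 : ℝ) ≤ (Pi.single i 1 : ι → ℝ) j :=
      (Pi.single_nonneg.2 zero_le_one : (0 : ι → ℝ) ≤ Pi.single i 1) j
    simpa using mul_nonneg hr this
  have := hf _ hmem
  rw [map_add, map_smul, smul_eq_mul, hrf] at this
  linarith

theorem exists_mem_convexHull_forall_le_of_forall_stdSimplex {ι : Type*} [Fintype ι]
    [Nonempty ι] {S : Set (ι → ℝ)} (hS : S.Finite) {δ : ℝ}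
    (h : ∀ α ∈ stdSimplex ℝ ι, ∃ s ∈ S, δ ≤ α ⬝ᵥ s) :
    ∃ c ∈ convexHull ℝ S, ∀ j, δ ≤ c j := by
  classical
  by_contra! hS_lt
  have hdisj : Disjoint (convexHull ℝ S) (univ.pi fun _ => Ici δ) :=
    disjoint_left.2 fun c hc hcδ => by
      obtain ⟨j, hj⟩ := hS_lt c hc
      exact hj.not_ge (hcδ j trivial)
  obtain ⟨f, u, v, hfu, huv, hfv⟩ := geometric_hahn_banach_compact_closed
    (convex_convexHull ℝ S) (hS.isCompact_convexHull ℝ) (convex_pi fun _ _ => convex_Ici δ)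
    (isClosed_set_pi fun _ _ => isClosed_Ici) hdisj
  set α : ι → ℝ := fun i => f (Pi.single i 1)
  have hf : ∀ x, f x = α ⬝ᵥ x := f.toLinearMap.apply_eq_dotProduct_single
  have hδ_mem : (fun _ => δ) ∈ univ.pi fun (_ : ι) => Ici δ := fun _ _ => mem_Ici.2 le_rfl
  have hα_nonneg : ∀ i, 0 ≤ α i := f.toLinearMap.apply_single_nonneg_of_forall_pi_Ici_lt hfv
  have hlt : ∀ s ∈ S, α ⬝ᵥ s < δ * ∑ i, α i := fun s hs =>
    calc α ⬝ᵥ s = f s := (hf s).symm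
      _ < u := hfu s (subset_convexHull ℝ S hs)
      _ < v := huv
      _ < f (fun _ => δ) := hfv _ hδ_mem
      _ = δ * ∑ i, α i := by simp [hf, dotProduct, Finset.mul_sum, mul_comm]
  rcases (Finset.sum_nonneg fun i _ => hα_nonneg i).eq_or_lt with hα_sum | hα_sum
  · have hα : α = 0 := funext fun i =>
      (Finset.sum_eq_zero_iff_of_nonneg fun i _ => hα_nonneg i).1 hα_sum.symm i (Finset.mem_univ i)
    obtain ⟨i⟩ := ‹Nonempty ι›
    obtain ⟨s, hs, -⟩ := h _ (single_mem_stdSimplex ℝ i)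
    simpa [hα] using hlt s hs
  · have hβ : (∑ i, α i)⁻¹ • α ∈ stdSimplex ℝ ι :=
      ⟨fun i => smul_nonneg (inv_nonneg.2 hα_sum.le) (hα_nonneg i), by
        simp [← Finset.mul_sum, hα_sum.ne']⟩
    obtain ⟨s, hs, hδs⟩ := h _ hβ
    rw [smul_dotProduct, smul_eq_mul, le_inv_mul_iff₀ hα_sum] at hδs
    linarith [hlt s hs]

theorem exists_probabilityMeasure_forall_le_measure_of_forall_stdSimplex {X ι : Type*}
    [MeasurableSpace X] [Fintype ι] [Nonempty ι] {K : Set X} {E : ι → Set X}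
    (hE : ∀ j, MeasurableSet (E j)) {δ : ℝ}
    (h : ∀ α ∈ stdSimplex ℝ ι, ∃ x ∈ K, δ ≤ ∑ j, α j * (E j).indicator 1 x) :
    ∃ ν : ProbabilityMeasure X, (ν : Measure X) K = 1 ∧
      ∀ j, ENNReal.ofReal δ ≤ (ν : Measure X) (E j) := by
  set χ : X → ι → ℝ := fun x j => (E j).indicator 1 x
  have hfin : (χ '' K).Finite := (Set.Finite.pi fun _ => Set.toFinite {0, 1}).subset <| by
    rintro _ ⟨x, -, rfl⟩ j -
    by_cases hx : x ∈ E j <;> simp [χ, hx]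
  obtain ⟨c, hc, hδc⟩ := exists_mem_convexHull_forall_le_of_forall_stdSimplex hfin fun α hα => by
    obtain ⟨x, hx, hδx⟩ := h α hα
    exact ⟨χ x, mem_image_of_mem χ hx, hδx⟩
  obtain ⟨κ, _, w, z, hw_nonneg, hw_sum, hz, rfl⟩ := mem_convexHull_iff_exists_fintype.1 hc
  choose x hxK hxz using hz
  set ν : Measure X := ∑ i, ENNReal.ofReal (w i) • Measure.dirac (x i)
  have hν_sum : ∑ i, ENNReal.ofReal (w i) = 1 := by
    rw [← ENNReal.ofReal_sum_of_nonneg fun i _ => hw_nonneg i, hw_sum, ENNReal.ofReal_one]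
  have : IsProbabilityMeasure ν := ⟨by simp [ν, hν_sum]⟩
  refine ⟨⟨ν, this⟩, ?_, fun j => ?_⟩
  · change ν K = 1
    refine le_antisymm prob_le_one (le_of_eq ?_)
    calc (1 : ℝ≥0∞) = ∑ i, ENNReal.ofReal (w i) * Measure.dirac (x i) K := by
          simp [Measure.dirac_apply_of_mem (hxK _), hν_sum]
      _ = ν K := by simp [ν]
  · calc ENNReal.ofReal δ ≤ ENNReal.ofReal (∑ i, w i * (E j).indicator 1 (x i)) := by
          simpa [← hxz, χ] using ENNReal.ofReal_le_ofReal (hδc j)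
      _ = ν (E j) := by
        rw [ENNReal.ofReal_sum_of_nonneg fun i _ => ?_]
        · simp only [ν, Measure.coe_finsetSum, Measure.coe_smul, Finset.sum_apply, Pi.smul_apply,
            smul_eq_mul, Measure.dirac_apply' _ (hE j)]
          refine Finset.sum_congr rfl fun i _ => ?_
          by_cases hx : x i ∈ E j <;> simp [hx]
        · by_cases hx : x i ∈ E j <;> simp [hx, hw_nonneg i]

theorem le_measure_limsup_atTop {α : Type*} [MeasurableSpace α] {μ : Measure α}
    [IsFiniteMeasure μ] {s : ℕ → Set α} (hs : ∀ n, MeasurableSet (s n)) {c : ℝ≥0∞}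
    (h : ∀ n, c ≤ μ (s n)) : c ≤ μ (limsup s atTop) := by
  have hanti : Antitone fun n => ⋃ i ≥ n, s i :=
    fun m n hmn => biUnion_mono (fun i (hi : n ≤ i) => hmn.trans hi) fun _ _ => subset_rfl
  rw [limsup_eq_iInf_iSup_of_nat]
  change c ≤ μ (⋂ n, ⋃ i ≥ n, s i)
  rw [hanti.measure_iInter
    (fun n => (MeasurableSet.biUnion (to_countable _) fun i _ => hs i).nullMeasurableSet)
    ⟨0, measure_ne_top μ _⟩]
  exact le_iInf fun n => (h n).trans (measure_mono (subset_biUnion_of_mem (le_refl n)))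

theorem exists_mem_frequently_mem_of_le_measure {α : Type*} [MeasurableSpace α]
    {μ : Measure α} [IsFiniteMeasure μ] {K : Set α} (hK : ∀ᵐ x ∂μ, x ∈ K)
    {s : ℕ → Set α} (hs : ∀ n, MeasurableSet (s n)) {c : ℝ≥0∞} (hc : c ≠ 0)
    (h : ∀ n, c ≤ μ (s n)) : ∃ x ∈ K, ∃ᶠ n in atTop, x ∈ s n := by
  have hfreq : ∃ᵐ x ∂μ, x ∈ limsup s atTop :=
    frequently_ae_iff.2 (ne_bot_of_le_ne_bot hc (le_measure_limsup_atTop hs h))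
  obtain ⟨x, hxK, hx⟩ := (hK.and_frequently hfreq).exists
  exact ⟨x, hxK, mem_limsup_iff_frequently_mem.1 hx⟩

theorem exists_probabilityMeasure_ae_mem_forall_le_measure
    {X : Type*} [MeasurableSpace X] [TopologicalSpace X] [CompactSpace X] [T2Space X]
    [BorelSpace X] [HasOuterApproxClosed X]
    (ν : ℕ → ProbabilityMeasure X) {K : Set X} (hK : IsClosed K)
    (hνK : ∀ n, (ν n : Measure X) K = 1) {E : ℕ → Set X} (hE : ∀ j, IsClopen (E j))
    {c : ℝ≥0∞} (hνE : ∀ j, ∀ᶠ n in atTop, c ≤ (ν n : Measure X) (E j)) :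
    ∃ μ : ProbabilityMeasure X, (∀ᵐ x ∂(μ : Measure X), x ∈ K) ∧
      ∀ j, c ≤ (μ : Measure X) (E j) := by
  obtain ⟨μ, -, hμ⟩ := isCompact_univ.exists_mapClusterPt (f := atTop) (u := ν)
    (le_principal_iff.2 univ_mem)
  obtain ⟨L, hL, hνμ⟩ := mapClusterPt_iff_ultrafilter.1 hμ
  refine ⟨μ, ae_iff.2 ((prob_compl_eq_zero_iff hK.measurableSet).2 ?_), fun j => ?_⟩
  · refine le_antisymm prob_le_one ?_
    calc (1 : ℝ≥0∞) = (L : Filter ℕ).limsup fun n => (ν n : Measure X) K := by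
          simp [hνK, limsup_const]
      _ ≤ _ := ProbabilityMeasure.limsup_measure_closed_le_of_tendsto hνμ hK
  · exact ge_of_tendsto
      (ProbabilityMeasure.tendsto_measure_of_null_frontier_of_tendsto' hνμ (by simp [hE j]))
      ((hνE j).filter_mono hL)

def allFinsetsIn (𝓕 : Set (Finset ℕ)) : Set (ℕ → Bool) :=
  {x | ∀ A : Finset ℕ, A.Nonempty → ↑A ⊆ {j | x j = true} → A ∈ 𝓕}

theorem isClopen_setOf_apply_eq_true (j : ℕ) : IsClopen {x : ℕ → Bool | x j = true} :=
  (isClopen_discrete {true}).preimage (continuous_apply j)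

theorem isClosed_allFinsetsIn (𝓕 : Set (Finset ℕ)) : IsClosed (allFinsetsIn 𝓕) := by
  have : allFinsetsIn 𝓕 =
      ⋂ A ∈ {A : Finset ℕ | A.Nonempty ∧ A ∉ 𝓕}, (⋂ j ∈ A, {x : ℕ → Bool | x j = true})ᶜ := by
    ext x
    simp only [mem_iInter, mem_compl_iff]
    constructor
    · rintro hx A ⟨hne, hA⟩ hxA
      exact hA (hx A hne fun j hj => hxA j hj)
    · intro hx A hne hxA
      by_contra hA
      exact hx A ⟨hne, hA⟩ fun j hj => hxA hj
  rw [this]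
  exact isClosed_biInter fun A _ =>
    (isClopen_biInter_finset fun j _ => isClopen_setOf_apply_eq_true j).compl.isClosed

theorem decide_mem_allFinsetsIn {𝓕 : Set (Finset ℕ)}
    (hdown : ∀ A ∈ 𝓕, ∀ B : Finset ℕ, B.Nonempty → B ⊆ A → B ∈ 𝓕) {A : Finset ℕ} (hA : A ∈ 𝓕) :
    (fun n => decide (n ∈ A)) ∈ allFinsetsIn 𝓕 :=
  fun B hB hBA => hdown A hA B hB fun n hn => by simpa using hBA hn

theorem exists_mem_allFinsetsIn_le_sum_indicator {δ : ℝ} {𝓕 : Set (Finset ℕ)}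
    (hdown : ∀ A ∈ 𝓕, ∀ B : Finset ℕ, B.Nonempty → B ⊆ A → B ∈ 𝓕)
    (hconv : ∀ (k : ℕ) (α : ℕ → ℝ), (∀ j, 0 ≤ α j) → (∀ j, k ≤ j → α j = 0) →
      ∑ j ∈ Finset.range k, α j = 1 → ∃ A ∈ 𝓕, δ ≤ ∑ j ∈ A, α j)
    {k : ℕ} {α : Fin k → ℝ} (hα : α ∈ stdSimplex ℝ (Fin k)) :
    ∃ x ∈ allFinsetsIn 𝓕, δ ≤ ∑ j, α j * {y : ℕ → Bool | y j = true}.indicator 1 x := by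
  set α' : ℕ → ℝ := fun n => if h : n < k then α ⟨n, h⟩ else 0
  have hα'_sum : ∀ s : Finset ℕ, ∑ n ∈ s, α' n = ∑ j : Fin k, if (j : ℕ) ∈ s then α j else 0 := by
    intro s
    calc ∑ n ∈ s, α' n = ∑ n ∈ Finset.range k ∩ s, α' n :=
          (Finset.sum_subset Finset.inter_subset_right fun n hns hn => dif_neg fun hnk =>
            hn (Finset.mem_inter.2 ⟨Finset.mem_range.2 hnk, hns⟩)).symm
      _ = ∑ j : Fin k, if (j : ℕ) ∈ s then α' j else 0 := by
          rw [← Finset.sum_ite_mem, Fin.sum_univ_eq_sum_range (fun n => if n ∈ s then α' n else 0)]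
      _ = ∑ j : Fin k, if (j : ℕ) ∈ s then α j else 0 := by simp [α']
  obtain ⟨A, hA, hδA⟩ := hconv k α' (fun n => by by_cases h : n < k <;> simp [α', h, hα.1])
    (fun n hn => dif_neg (by omega)) (by simpa [hα'_sum] using hα.2)
  refine ⟨fun n => decide (n ∈ A), decide_mem_allFinsetsIn hdown hA, ?_⟩
  rw [hα'_sum] at hδA
  refine hδA.trans_eq (Finset.sum_congr rfl fun j _ => ?_)
  by_cases hj : (j : ℕ) ∈ A <;> simp [hj]

theorem stmt_11_general (δ : ℝ) (hδ0 : 0 < δ)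
    (𝓕 : Set (Finset ℕ))
    (hdown : ∀ A ∈ 𝓕, ∀ B : Finset ℕ, B.Nonempty → B ⊆ A → B ∈ 𝓕)
    (hconv : ∀ (k : ℕ) (α : ℕ → ℝ), (∀ j, 0 ≤ α j) → (∀ j, k ≤ j → α j = 0) →
      ∑ j ∈ Finset.range k, α j = 1 → ∃ A ∈ 𝓕, δ ≤ ∑ j ∈ A, α j) :
    ∃ M : Set ℕ, M.Infinite ∧ ∀ A : Finset ℕ, A.Nonempty → ↑A ⊆ M → A ∈ 𝓕 := by
  set E : ℕ → Set (ℕ → Bool) := fun j => {x | x j = true}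
  have hν : ∀ k, ∃ ν : ProbabilityMeasure (ℕ → Bool), (ν : Measure _) (allFinsetsIn 𝓕) = 1 ∧
      ∀ j : Fin (k + 1), ENNReal.ofReal δ ≤ (ν : Measure _) (E j) := fun k =>
    exists_probabilityMeasure_forall_le_measure_of_forall_stdSimplex
      (E := fun j : Fin (k + 1) => E j)
      (fun j => (isClopen_setOf_apply_eq_true j).isClosed.measurableSet)
      fun α hα => exists_mem_allFinsetsIn_le_sum_indicator hdown hconv hα
  choose ν hνK hνE using hν
  obtain ⟨μ, hμK, hμE⟩ := exists_probabilityMeasure_ae_mem_forall_le_measure ν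
    (isClosed_allFinsetsIn 𝓕) hνK isClopen_setOf_apply_eq_true
    fun j => eventually_atTop.2 ⟨j, fun k hk => hνE k ⟨j, by omega⟩⟩
  obtain ⟨x, hx, hx_freq⟩ := exists_mem_frequently_mem_of_le_measure hμK
    (fun j => (isClopen_setOf_apply_eq_true j).isClosed.measurableSet)
    (ENNReal.ofReal_pos.2 hδ0).ne' hμE
  exact ⟨{j | x j = true}, Nat.frequently_atTop_iff_infinite.1 hx_freq, hx⟩

/-- Pták's combinatorial lemma.  Let `0 < δ < 1` and let `𝓕` be a collection of non-empty
finite subsets of `ℕ` that is downward closed under non-empty subsets and such that for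
every `k` and every convex combination `(α_0, …, α_{k-1})` there is `A ∈ 𝓕` with
`∑_{j ∈ A} α_j ≥ δ`.  Then there is an infinite `M ⊆ ℕ` all of whose non-empty finite
subsets belong to `𝓕`. -/
theorem stmt_11 (δ : ℝ) (hδ0 : 0 < δ) (hδ1 : δ < 1)
    (𝓕 : Set (Finset ℕ))
    (hne : ∀ A ∈ 𝓕, A.Nonempty)
    (hdown : ∀ A ∈ 𝓕, ∀ B : Finset ℕ, B.Nonempty → B ⊆ A → B ∈ 𝓕)
    (hconv : ∀ (k : ℕ) (α : ℕ → ℝ), (∀ j, 0 ≤ α j) → (∀ j, k ≤ j → α j = 0) →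
      ∑ j ∈ Finset.range k, α j = 1 → ∃ A ∈ 𝓕, δ ≤ ∑ j ∈ A, α j) :
    ∃ M : Set ℕ, M.Infinite ∧ ∀ A : Finset ℕ, A.Nonempty → ↑A ⊆ M → A ∈ 𝓕 :=
  stmt_11_general δ hδ0 𝓕 hdown hconv
end

section
/- Let x* ∈ B_{J*} have the w*-representation x* = w*-∑_j a_j f_j* with respect to the summing basis (f_n) of James' space J. There is a uniform constant C < ∞ such that: if ε > 0 and there are indices p_1 < q_1 < p_2 < q_2 < … < p_k < q_k with |a_{p_i} − a_{q_i}| > ε for i = 1,…,k, then k ≤ C/ε². In particular lim_j a_j exists. -/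
/-!
Test `φ` against `y = ∑ⱼ θⱼ (f_{pⱼ} - f_{qⱼ})`, `θⱼ` the sign of `a_{pⱼ} - a_{qⱼ}`, so that
`φ y > k ε`. As the pairs `pⱼ < qⱼ` are interlaced, the partial sums of the coordinates of `y` lie
in `[-1, 1]`, and the coordinates have `ℓ¹`-norm at most `2k`. So every interval sum of `y` has
absolute value at most `2`, the interval sums over disjoint intervals have absolute values adding
up to at most `2k`, and every square variation of `y` is at most `4k`. Hence `k ε < φ y ≤ 2 √k`,
i.e. `k ≤ 4 / ε²`. If `(a_j)` were not Cauchy, one could pick arbitrarily many interlaced jumps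
of a fixed size.
-/

open Filter Topology Finset

section Interlaced

variable {u v : ℕ → ℕ} {m : ℕ}

theorem le_of_interlaced (huv : ∀ i < m, u i ≤ v i) (hvu : ∀ i, i + 1 < m → v i ≤ u (i + 1))
    {i j : ℕ} (hij : i < j) (hjm : j < m) : v i ≤ u j := by
  induction j, hij using Nat.le_induction with
  | base => exact hvu i hjm
  | succ j hij ih => exact (ih (by omega)).trans ((huv j (by omega)).trans (hvu j hjm))

theorem pairwiseDisjoint_Ico_of_interlaced (huv : ∀ i < m, u i ≤ v i)
    (hvu : ∀ i, i + 1 < m → v i ≤ u (i + 1)) :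
    (range m : Set ℕ).PairwiseDisjoint fun i => Ico (u i) (v i) := by
  intro i hi j hj hij
  simp only [coe_range, Set.mem_Iio] at hi hj
  rw [Function.onFun, Finset.disjoint_left]
  intro x hxi hxj
  simp only [Finset.mem_Ico] at hxi hxj
  rcases hij.lt_or_gt with h | h
  · linarith [le_of_interlaced huv hvu h hj]
  · linarith [le_of_interlaced huv hvu h hi]

theorem card_filter_mem_Ioc_le_one (huv : ∀ i < m, u i ≤ v i)
    (hvu : ∀ i, i + 1 < m → v i ≤ u (i + 1)) (x : ℕ) :
    #{i ∈ range m | x ∈ Ioc (u i) (v i)} ≤ 1 := by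
  refine Finset.card_le_one.2 fun i hi j hj => ?_
  simp only [Finset.mem_filter, Finset.mem_range, Finset.mem_Ioc] at hi hj
  by_contra hij
  rcases Ne.lt_or_gt hij with h | h
  · linarith [le_of_interlaced huv hvu h hj.1]
  · linarith [le_of_interlaced huv hvu h hi.1]

end Interlaced

theorem sum_sq_sum_Ico_le {y : ℕ → ℝ} {M N : ℝ} (hprefix : ∀ n, |∑ s ∈ range n, y s| ≤ M)
    (hl1 : ∀ T : Finset ℕ, ∑ s ∈ T, |y s| ≤ N) {m : ℕ} {u v : ℕ → ℕ}
    (huv : ∀ i < m, u i ≤ v i) (hvu : ∀ i, i + 1 < m → v i ≤ u (i + 1)) :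
    ∑ i ∈ range m, (∑ s ∈ Ico (u i) (v i), y s) ^ 2 ≤ 2 * M * N := by
  set S := fun i => ∑ s ∈ Ico (u i) (v i), y s
  have hS : ∀ i < m, |S i| ≤ 2 * M := fun i hi => by
    simp only [S, sum_Ico_eq_sub _ (huv i hi)]
    linarith [abs_sub (∑ s ∈ range (v i), y s) (∑ s ∈ range (u i), y s),
      hprefix (v i), hprefix (u i)]
  have hM : 0 ≤ M := by simpa using hprefix 0
  have hSN : ∑ i ∈ range m, |S i| ≤ N := calc
    _ ≤ ∑ i ∈ range m, ∑ s ∈ Ico (u i) (v i), |y s| :=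
      sum_le_sum fun i _ => abs_sum_le_sum_abs _ _
    _ = ∑ s ∈ (range m).biUnion (fun i => Ico (u i) (v i)), |y s| :=
      (sum_biUnion (pairwiseDisjoint_Ico_of_interlaced huv hvu)).symm
    _ ≤ N := hl1 _
  calc ∑ i ∈ range m, S i ^ 2 ≤ ∑ i ∈ range m, 2 * M * |S i| := sum_le_sum fun i hi => by
        rw [← sq_abs, sq]
        exact mul_le_mul_of_nonneg_right (hS i (Finset.mem_range.1 hi)) (abs_nonneg _)
    _ = 2 * M * ∑ i ∈ range m, |S i| := (mul_sum _ _ _).symm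
    _ ≤ 2 * M * N := by gcongr

noncomputable def signedPairSum (k : ℕ) (p q : ℕ → ℕ) (θ : ℕ → ℝ) : ℕ →₀ ℝ :=
  ∑ j ∈ range k, θ j • (Finsupp.single (p j) 1 - Finsupp.single (q j) 1)

section SignedPairSum

variable {k : ℕ} {p q : ℕ → ℕ} {θ : ℕ → ℝ}

theorem signedPairSum_apply (s : ℕ) :
    signedPairSum k p q θ s =
      ∑ j ∈ range k, θ j * ((if p j = s then 1 else 0) - (if q j = s then 1 else 0)) := by
  simp [signedPairSum, Finsupp.finsetSum_apply, Finsupp.single_apply]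

theorem sum_signedPairSum_apply (T : Finset ℕ) :
    ∑ s ∈ T, signedPairSum k p q θ s =
      ∑ j ∈ range k, θ j * ((if p j ∈ T then 1 else 0) - (if q j ∈ T then 1 else 0)) := by
  simp only [signedPairSum_apply]
  rw [sum_comm]
  refine sum_congr rfl fun j _ => ?_
  rw [← mul_sum, sum_sub_distrib, sum_ite_eq, sum_ite_eq]

theorem abs_sum_range_signedPairSum_le_one (hθ : ∀ j, |θ j| ≤ 1)
    (hpq : ∀ i < k, p i < q i) (hqp : ∀ i, i + 1 < k → q i < p (i + 1)) (n : ℕ) :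
    |∑ s ∈ range n, signedPairSum k p q θ s| ≤ 1 := by
  have hterm : ∀ j ∈ range k, θ j * ((if p j ∈ range n then 1 else 0) -
      (if q j ∈ range n then 1 else 0)) = if n ∈ Ioc (p j) (q j) then θ j else 0 := by
    intro j hj
    have := hpq j (Finset.mem_range.1 hj)
    simp only [Finset.mem_range, Finset.mem_Ioc]
    split_ifs <;> first | omega | simp
  rw [sum_signedPairSum_apply, sum_congr rfl hterm, ← sum_filter]
  calc _ ≤ ∑ j ∈ range k with n ∈ Ioc (p j) (q j), |θ j| := abs_sum_le_sum_abs _ _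
    _ ≤ #{j ∈ range k | n ∈ Ioc (p j) (q j)} • (1 : ℝ) := sum_le_card_nsmul _ _ _ fun j _ => hθ j
    _ ≤ 1 := by
      rw [nsmul_one]
      exact_mod_cast card_filter_mem_Ioc_le_one (fun i hi => (hpq i hi).le)
        (fun i hi => (hqp i hi).le) n

theorem sum_abs_signedPairSum_le (hθ : ∀ j, |θ j| ≤ 1) (T : Finset ℕ) :
    ∑ s ∈ T, |signedPairSum k p q θ s| ≤ 2 * k := by
  have hpoint : ∀ s, |signedPairSum k p q θ s| ≤
      ∑ j ∈ range k, ((if p j = s then 1 else 0) + (if q j = s then 1 else 0)) := fun s => by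
    rw [signedPairSum_apply]
    refine (abs_sum_le_sum_abs _ _).trans (sum_le_sum fun j _ => ?_)
    rw [abs_mul]
    refine (mul_le_of_le_one_left (abs_nonneg _) (hθ j)).trans ?_
    split_ifs <;> norm_num
  calc _ ≤ ∑ s ∈ T, ∑ j ∈ range k, ((if p j = s then 1 else 0) + (if q j = s then 1 else 0)) :=
        sum_le_sum fun s _ => hpoint s
    _ = ∑ j ∈ range k, ((if p j ∈ T then 1 else 0) + (if q j ∈ T then 1 else 0)) := by
        rw [sum_comm]
        simp only [sum_add_distrib, sum_ite_eq]
    _ ≤ ∑ _j ∈ range k, (2 : ℝ) := sum_le_sum fun j _ => by split_ifs <;> norm_num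
    _ = 2 * k := by simp [mul_comm]

theorem sum_sq_sum_Ico_signedPairSum_le (hθ : ∀ j, |θ j| ≤ 1)
    (hpq : ∀ i < k, p i < q i) (hqp : ∀ i, i + 1 < k → q i < p (i + 1))
    {m : ℕ} {u v : ℕ → ℕ} (huv : ∀ i < m, u i < v i) (hvu : ∀ i, i + 1 < m → v i ≤ u (i + 1)) :
    ∑ i ∈ range m, (∑ s ∈ Ico (u i) (v i), signedPairSum k p q θ s) ^ 2 ≤ (2 * √k) ^ 2 := by
  rw [mul_pow, Real.sq_sqrt k.cast_nonneg]
  linarith [sum_sq_sum_Ico_le (abs_sum_range_signedPairSum_le_one hθ hpq hqp)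
    (sum_abs_signedPairSum_le hθ) (fun i hi => (huv i hi).le) hvu]

end SignedPairSum

theorem le_div_sq_of_mul_le_two_sqrt {x ε : ℝ} (hx : 0 ≤ x) (hε : 0 < ε) (h : x * ε ≤ 2 * √x) :
    x ≤ 4 / ε ^ 2 := by
  have hsq : (x * ε) ^ 2 ≤ 4 * x := by
    calc (x * ε) ^ 2 ≤ (2 * √x) ^ 2 := pow_le_pow_left₀ (by positivity) h 2
      _ = 4 * x := by rw [mul_pow, Real.sq_sqrt hx]; ring
  rw [le_div_iff₀ (by positivity)]
  rcases hx.eq_or_lt with rfl | hx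
  · simp
  · nlinarith

open SignType in
theorem card_le_four_div_sq_of_interlaced_jumps (φ : (ℕ →₀ ℝ) →ₗ[ℝ] ℝ)
    (hφ : ∀ (y : ℕ →₀ ℝ) (c : ℝ), 0 ≤ c →
      (∀ (m : ℕ) (u v : ℕ → ℕ), (∀ i < m, u i < v i) → (∀ i, i + 1 < m → v i ≤ u (i + 1)) →
        ∑ i ∈ range m, (∑ s ∈ Ico (u i) (v i), y s) ^ 2 ≤ c ^ 2) → |φ y| ≤ c)
    {ε : ℝ} (hε : 0 < ε) {k : ℕ} {p q : ℕ → ℕ}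
    (hpq : ∀ i < k, p i < q i) (hqp : ∀ i, i + 1 < k → q i < p (i + 1))
    (hjump : ∀ i < k, ε < |φ (Finsupp.single (p i) 1) - φ (Finsupp.single (q i) 1)|) :
    (k : ℝ) ≤ 4 / ε ^ 2 := by
  set d := fun j => φ (Finsupp.single (p j) 1) - φ (Finsupp.single (q j) 1)
  set θ := fun j => (sign (d j) : ℝ)
  have hθ : ∀ j, |θ j| ≤ 1 := fun j => by simp only [θ]; cases sign (d j) <;> simp
  have hupper : |φ (signedPairSum k p q θ)| ≤ 2 * √k := hφ _ _ (by positivity)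
    fun _ _ _ huv hvu => sum_sq_sum_Ico_signedPairSum_le hθ hpq hqp huv hvu
  have heval : φ (signedPairSum k p q θ) = ∑ j ∈ range k, |d j| := by
    simp only [signedPairSum, map_sum, map_smul, map_sub, smul_eq_mul]
    exact sum_congr rfl fun j _ => sign_mul_self (d j)
  have hlower : (k : ℝ) * ε ≤ φ (signedPairSum k p q θ) := by
    rw [heval]
    simpa using card_nsmul_le_sum (range k) (fun j => |d j|) ε
      fun j hj => (hjump j (Finset.mem_range.1 hj)).le
  exact le_div_sq_of_mul_le_two_sqrt k.cast_nonneg hε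
    (hlower.trans ((le_abs_self _).trans hupper))

theorem cauchySeq_of_interlaced_jumps_bounded {α : Type*} [PseudoMetricSpace α]
    {a : ℕ → α} (h : ∀ ε > 0, ∃ B : ℝ, ∀ (k : ℕ) (p q : ℕ → ℕ), (∀ i < k, p i < q i) →
      (∀ i, i + 1 < k → q i < p (i + 1)) → (∀ i < k, ε < dist (a (p i)) (a (q i))) → (k : ℝ) ≤ B) :
    CauchySeq a := by
  by_contra hnc
  simp only [Metric.cauchySeq_iff', not_forall, not_exists, not_lt] at hnc
  obtain ⟨ε, hε, hfar⟩ := hnc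
  have hjump : ∀ N, ∃ n, N < n ∧ ε / 2 < dist (a N) (a n) := fun N => by
    obtain ⟨n, hNn, hdist⟩ := hfar N
    refine ⟨n, hNn.lt_of_ne ?_, by rw [dist_comm]; linarith⟩
    rintro rfl
    simp only [dist_self] at hdist
    linarith
  choose Q hNQ hQ using hjump
  -- the `i`-th jump starts at `r i`, just past the end of the previous one
  set r : ℕ → ℕ := fun i => (fun N => Q N + 1)^[i] 0
  have hr : ∀ i, r (i + 1) = Q (r i) + 1 := fun i => Function.iterate_succ_apply' _ i 0
  obtain ⟨B, hB⟩ := h (ε / 2) (half_pos hε)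
  have hcount := hB (⌈B⌉₊ + 1) r (Q ∘ r) (fun i _ => hNQ (r i)) (fun i _ => by simp [hr])
    (fun i _ => hQ (r i))
  push_cast at hcount
  linarith [Nat.le_ceil B]

/-- Lemma 3.1 of Odell–Tylli.  Represent elements of James' space `J` by their (finitely
supported) coordinates with respect to the summing basis `(f_n)`, with the norm of `y`
given as the supremum of `(∑_i S_i*(y)²)^{1/2}` over increasing families of intervals,
`S*(y) = ∑_{s ∈ S} y(s)`.  Let `φ` be a linear functional in the unit ball of `J*`
(that is, `|φ(y)| ≤ c` whenever `c ≥ 0` bounds all square variations of `y`), and let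
`a_j = φ(f_j)` be the coefficients of its `w*`-representation `φ = w*-∑_j a_j f_j*`.
There is a uniform constant `C > 0` such that: if `ε > 0` and there are indices
`p_1 < q_1 < p_2 < q_2 < … < p_k < q_k` with `|a_{p_i} - a_{q_i}| > ε` for all `i`,
then `k ≤ C / ε²`.  In particular `lim_j a_j` exists. -/
theorem stmt_13 :
    ∃ C : ℝ, 0 < C ∧
      ∀ φ : (ℕ →₀ ℝ) →ₗ[ℝ] ℝ,
        (∀ (y : ℕ →₀ ℝ) (c : ℝ), 0 ≤ c →
          (∀ (m : ℕ) (u v : ℕ → ℕ), (∀ i < m, u i < v i) →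
            (∀ i, i + 1 < m → v i ≤ u (i + 1)) →
            ∑ i ∈ Finset.range m, (∑ s ∈ Finset.Ico (u i) (v i), y s) ^ 2 ≤ c ^ 2) →
          |φ y| ≤ c) →
        ((∀ (ε : ℝ) (k : ℕ) (p q : ℕ → ℕ), 0 < ε →
            (∀ i < k, p i < q i) → (∀ i, i + 1 < k → q i < p (i + 1)) →
            (∀ i < k, ε < |φ (Finsupp.single (p i) 1) - φ (Finsupp.single (q i) 1)|) →
            (k : ℝ) ≤ C / ε ^ 2) ∧
          ∃ L : ℝ, Tendsto (fun j => φ (Finsupp.single j 1)) atTop (nhds L)) := by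
  refine ⟨4, by norm_num, fun φ hφ => ⟨?_, ?_⟩⟩
  · exact fun ε k p q hε hpq hqp hjump => card_le_four_div_sq_of_interlaced_jumps φ hφ hε hpq hqp hjump
  · refine cauchySeq_tendsto_of_complete (cauchySeq_of_interlaced_jumps_bounded ?_)
    exact fun ε hε => ⟨4 / ε ^ 2, fun k p q hpq hqp hjump =>
      card_le_four_div_sq_of_interlaced_jumps φ hφ hε hpq hqp (by simpa only [Real.dist_eq] using hjump)⟩
end

section
/- Let E be a non-reflexive Banach space with a subsymmetric Schauder basis (e_n) that is weakly null. Then E does not have the weakly compact approximation property: there is a weakly compact subset D ⊆ E (namely {e_n : n ∈ ℕ} ∪ {0}) and ε > 0 such that any bounded operator V on E with sup_n ‖e_n − V e_n‖ < ε fails to be weakly compact. -/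
open Filter Topology

section WeakCompactness

variable {E F G : Type*} [NormedAddCommGroup E] [NormedSpace ℝ E]
  [NormedAddCommGroup F] [NormedSpace ℝ F] [NormedAddCommGroup G] [NormedSpace ℝ G]

theorem Filter.Tendsto.isWeaklyCompact_range_union_zero {e : ℕ → E}
    (he : Tendsto (fun n => toWeakSpace ℝ E (e n)) atTop (𝓝 0)) :
    IsWeaklyCompact (Set.range e ∪ {0}) := by
  have : toWeakSpace ℝ E '' (Set.range e ∪ {0}) =
      insert 0 (Set.range fun n => toWeakSpace ℝ E (e n)) := by
    rw [Set.image_union, Set.image_singleton, map_zero, Set.union_singleton, ← Set.range_comp]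
    rfl
  rw [IsWeaklyCompact, this]
  exact he.isCompact_insert_range

theorem tendsto_apply_of_tendsto_toWeakSpace {ι : Type*} {l : Filter ι} {x : ι → E}
    (hx : Tendsto (fun i => toWeakSpace ℝ E (x i)) l (𝓝 0)) (f : E →L[ℝ] ℝ) :
    Tendsto (fun i => f (x i)) l (𝓝 0) := by
  convert ((WeakBilin.eval_continuous _ f).tendsto 0).comp hx using 2
  · rfl
  · exact (map_zero f).symm

theorem IsWeaklyCompactOp.comp {V : F →L[ℝ] G} (hV : IsWeaklyCompactOp V) (S : E →L[ℝ] F) :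
    IsWeaklyCompactOp (V.comp S) := by
  set r : ℝ := ‖S‖ + 1
  have hr : 0 < r := by positivity
  refine (hV.image (continuous_const_smul r)).closure_of_subset ?_
  rintro - ⟨-, ⟨x, hx, rfl⟩, rfl⟩
  have hSx : r⁻¹ • S x ∈ Metric.closedBall (0 : F) 1 := by
    rw [Metric.mem_closedBall, dist_zero_right, norm_smul, Real.norm_of_nonneg (by positivity),
      inv_mul_le_one₀ hr]
    rw [Metric.mem_closedBall, dist_zero_right] at hx
    calc ‖S x‖ ≤ ‖S‖ * ‖x‖ := S.le_opNorm x
      _ ≤ ‖S‖ * 1 := by gcongr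
      _ ≤ r := by simp [r]
  refine ⟨toWeakSpace ℝ G (V (r⁻¹ • S x)), subset_closure ⟨_, ⟨_, hSx, rfl⟩, rfl⟩, ?_⟩
  change r • toWeakSpace ℝ G (V (r⁻¹ • S x)) = toWeakSpace ℝ G (V (S x))
  rw [← map_smul, ← map_smul, smul_inv_smul₀ hr.ne']

theorem exists_comp_eq_of_antilipschitz {A : E →L[ℝ] F} {κ : NNReal} (hA : AntilipschitzWith κ A)
    (f : E →L[ℝ] ℝ) : ∃ g : F →L[ℝ] ℝ, g.comp A = f := by
  set A' := LinearEquiv.ofInjective (A : E →ₗ[ℝ] F) hA.injective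
  set h : LinearMap.range (A : E →ₗ[ℝ] F) →ₗ[ℝ] ℝ := (f : E →ₗ[ℝ] ℝ).comp A'.symm.toLinearMap
  have h_bound : ∀ y, ‖h y‖ ≤ ‖f‖ * κ * ‖y‖ := by
    intro y
    obtain ⟨x, rfl⟩ := A'.surjective y
    calc ‖h (A' x)‖ = ‖f x‖ := by simp [h]
      _ ≤ ‖f‖ * ‖x‖ := f.le_opNorm x
      _ ≤ ‖f‖ * (κ * ‖A x‖) := by gcongr; exact hA.le_mul_norm (map_zero A) x
      _ = ‖f‖ * κ * ‖A' x‖ := by simp [A', mul_assoc]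
  obtain ⟨g, hg, -⟩ := exists_extension_norm_eq _ (h.mkContinuous _ h_bound)
  refine ⟨g, ContinuousLinearMap.ext fun x => ?_⟩
  simpa [h, A'] using hg (A' x)

theorem isWeaklyCompact_closedBall_of_antilipschitz [CompleteSpace E] {A : E →L[ℝ] F}
    {κ : NNReal} (hA : AntilipschitzWith κ A) (hAwc : IsWeaklyCompactOp A) :
    IsWeaklyCompact (Metric.closedBall (0 : E) 1) := by
  set B := Metric.closedBall (0 : E) 1
  have hclosed : IsClosed (A '' B) :=
    (hA.isClosedEmbedding A.uniformContinuous).isClosedMap _ Metric.isClosed_closedBall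
  have hcpt : IsCompact (toWeakSpace ℝ F '' (A '' B)) := by
    have := ((convex_closedBall (0 : E) 1).linear_image (A : E →ₗ[ℝ] F)).toWeakSpace_closure ℝ
    rw [ContinuousLinearMap.coe_coe, hclosed.closure_eq] at this
    rw [this]
    exact hAwc
  choose g hg using fun f => exists_comp_eq_of_antilipschitz hA f
  -- `j` induces the weak topology of `E` and `Φ ∘ A = j`, so `j '' B = Φ '' (A '' B)`.
  let j : WeakSpace ℝ E → (StrongDual ℝ E → ℝ) := fun w f => (topDualPairing ℝ E).flip w f
  let Φ : WeakSpace ℝ F → (StrongDual ℝ E → ℝ) := fun w f => (topDualPairing ℝ F).flip w (g f)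
  have hj : Topology.IsInducing j := Topology.IsInducing.induced _
  have hΦ : Continuous Φ := continuous_pi fun f => WeakBilin.eval_continuous _ (g f)
  rw [IsWeaklyCompact, hj.isCompact_iff]
  convert hcpt.image hΦ using 1
  simp only [Set.image_image]
  refine Set.image_congr fun x _ => funext fun f => ?_
  exact (congrArg (· x) (hg f)).symm

end WeakCompactness

theorem exists_pos_le_of_forall_strictMono {r : ℕ → ℝ} (hr : ∀ n, 0 < r n)
    (h : ∀ m : ℕ → ℕ, StrictMono m → ∃ c > 0, ∀ k, c * r k ≤ r (m k)) :
    ∃ δ > 0, ∀ n, δ ≤ r n := by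
  by_contra! hcon
  have hfreq : ∀ θ > 0, ∃ᶠ n in atTop, r n < θ := by
    intro θ hθ
    by_contra! hev
    obtain ⟨M, hM⟩ := eventually_atTop.1 hev
    obtain ⟨m, -, hm⟩ := (Finset.range (M + 1)).exists_min_image r ⟨0, by simp⟩
    obtain ⟨n, hn⟩ := hcon (min θ (r m)) (lt_min hθ (hr m))
    rcases le_or_gt M n with hMn | hnM
    · exact (hn.trans_le (min_le_left _ _)).not_ge (hM n hMn)
    · exact (hn.trans_le (min_le_right _ _)).not_ge
        (hm n (Finset.mem_range.2 (hnM.trans M.lt_succ_self)))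
  obtain ⟨ψ, hψ, hsmall⟩ := extraction_forall_of_frequently fun k =>
    hfreq ((1 / 2) ^ k * r k) (mul_pos (by positivity) (hr k))
  obtain ⟨c, hc, hcψ⟩ := h ψ hψ
  obtain ⟨k, hk⟩ := exists_pow_lt_of_lt_one hc (by norm_num : (1 : ℝ) / 2 < 1)
  exact hk.not_gt (lt_of_mul_lt_mul_right ((hcψ k).trans_lt (hsmall k)) (hr k).le)

section Signs

variable {E : Type*} [NormedAddCommGroup E] [NormedSpace ℝ E]

theorem norm_add_smul_le_max (u d : E) {μ : ℝ} (hμ : |μ| ≤ 1) :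
    ‖u + μ • d‖ ≤ max ‖u - d‖ ‖u + d‖ := by
  obtain ⟨hμ₁, hμ₂⟩ := abs_le.1 hμ
  refine convexOn_univ_norm.le_max_of_mem_segment (Set.mem_univ _) (Set.mem_univ _)
    ⟨(1 - μ) / 2, (1 + μ) / 2, by linarith, by linarith, by ring, ?_⟩
  module

theorem exists_subset_norm_add_sum_smul_le {ι : Type*} [DecidableEq ι] (d : ι → E)
    (μ : ι → ℝ) (s : Finset ι) (hμ : ∀ i ∈ s, |μ i| ≤ 1) (v : E) :
    ∃ t ⊆ s, ‖v + ∑ i ∈ s, μ i • d i‖ ≤ ‖v + (2 • ∑ i ∈ t, d i - ∑ i ∈ s, d i)‖ := by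
  -- `2 • ∑ t - ∑ s` is the sign combination `∑ t - ∑ (s \ t)`; `v` is carried along for the
  -- induction, which replaces one coefficient at a time by `±1` (`norm_add_smul_le_max`).
  induction s using Finset.induction_on generalizing v with
  | empty => exact ⟨∅, subset_rfl, by simp⟩
  | insert i s hi ih =>
    have hμs : ∀ j ∈ s, |μ j| ≤ 1 := fun j hj => hμ j (Finset.mem_insert_of_mem hj)
    set w := ∑ j ∈ s, μ j • d j
    have hmax := norm_add_smul_le_max (v + w) (d i) (hμ i (Finset.mem_insert_self i s))
    rw [Finset.sum_insert hi, Finset.sum_insert hi]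
    have hvw : ‖v + (μ i • d i + w)‖ = ‖v + w + μ i • d i‖ := by congr 1; abel
    rcases le_total ‖v + w - d i‖ ‖v + w + d i‖ with hle | hle
    · obtain ⟨t, hts, ht⟩ := ih hμs (v + d i)
      have hit : i ∉ t := fun h => hi (hts h)
      refine ⟨insert i t, Finset.insert_subset_insert i hts, ?_⟩
      calc ‖v + (μ i • d i + w)‖ ≤ ‖v + d i + w‖ := by
            rw [hvw, show v + d i + w = v + w + d i by abel]; exact hmax.trans (max_le hle le_rfl)
        _ ≤ _ := ht
        _ = _ := by rw [Finset.sum_insert hit]; congr 1; module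
    · obtain ⟨t, hts, ht⟩ := ih hμs (v - d i)
      refine ⟨t, hts.trans (Finset.subset_insert i s), ?_⟩
      calc ‖v + (μ i • d i + w)‖ ≤ ‖v - d i + w‖ := by
            rw [hvw, show v - d i + w = v + w - d i by abel]; exact hmax.trans (max_le le_rfl hle)
        _ ≤ _ := ht
        _ = _ := by congr 1; module

end Signs

theorem eq_of_mem_Ico_of_forall_mem_Ico {n N : ℕ → ℕ}
    (hn : ∀ k, n k ∈ Finset.Ico (N k) (N (k + 1))) {j k : ℕ}
    (hjk : n j ∈ Finset.Ico (N k) (N (k + 1))) : j = k := by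
  simp only [Finset.mem_Ico] at hn hjk
  have hN : Monotone N := monotone_nat_of_le_succ fun k => ((hn k).1.trans_lt (hn k).2).le
  rcases lt_trichotomy j k with hlt | rfl | hlt
  · have := hN (show j + 1 ≤ k by omega)
    have := (hn j).2
    omega
  · rfl
  · have := hN (show k + 1 ≤ j by omega)
    have := (hn j).1
    omega

structure IsUnconditionalBasis {E : Type*} [NormedAddCommGroup E] [NormedSpace ℝ E]
    (e : ℕ → E) (b : ℕ → E →L[ℝ] ℝ) (K : ℝ) : Prop where
  coord_apply : ∀ i j, b i (e j) = if i = j then 1 else 0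
  tendsto_sum : ∀ x, Tendsto (fun n => ∑ j ∈ Finset.range n, b j x • e j) atTop (𝓝 x)
  norm_sum_le : ∀ (a : ℕ → ℝ) (s t : Finset ℕ), s ⊆ t →
    ‖∑ j ∈ s, a j • e j‖ ≤ K * ‖∑ j ∈ t, a j • e j‖

namespace IsUnconditionalBasis

variable {E F : Type*} [NormedAddCommGroup E] [NormedSpace ℝ E]
  [NormedAddCommGroup F] [NormedSpace ℝ F] {e : ℕ → E} {b : ℕ → E →L[ℝ] ℝ} {K : ℝ}

theorem ne_zero (h : IsUnconditionalBasis e b K) (i : ℕ) : e i ≠ 0 := fun hi => by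
  simpa [hi] using h.coord_apply i i

theorem one_le (h : IsUnconditionalBasis e b K) : 1 ≤ K := by
  have hpos := norm_pos_iff.2 (h.ne_zero 0)
  have := h.norm_sum_le (fun _ => 1) {0} {0} subset_rfl
  simp only [Finset.sum_singleton, one_smul] at this
  nlinarith

theorem coord_sum_smul (h : IsUnconditionalBasis e b K) {n : ℕ → ℕ} (hn : n.Injective)
    (a : ℕ → ℝ) (s : Finset ℕ) (j : ℕ) :
    b (n j) (∑ k ∈ s, a k • e (n k)) = if j ∈ s then a j else 0 := by
  simp [map_sum, h.coord_apply, hn.eq_iff]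

theorem norm_sum_coord_le (h : IsUnconditionalBasis e b K) (s : Finset ℕ) (x : E) :
    ‖∑ i ∈ s, b i x • e i‖ ≤ K * ‖x‖ := by
  obtain ⟨N, hN⟩ := s.exists_nat_subset_range
  refine ge_of_tendsto ((h.tendsto_sum x).norm.const_mul K) ?_
  filter_upwards [eventually_ge_atTop N] with M hM
  exact h.norm_sum_le _ s _ (hN.trans (Finset.range_subset_range.2 hM))

theorem abs_coord_le (h : IsUnconditionalBasis e b K) {δ : ℝ} (hδ : 0 < δ)
    (he : ∀ n, δ ≤ ‖e n‖) (i : ℕ) (x : E) : |b i x| ≤ K / δ * ‖x‖ := by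
  have := h.norm_sum_coord_le {i} x
  rw [Finset.sum_singleton, norm_smul, Real.norm_eq_abs] at this
  rw [div_mul_eq_mul_div, le_div_iff₀ hδ]
  nlinarith [he i, abs_nonneg (b i x)]

theorem norm_sum_mul_coord_le (h : IsUnconditionalBasis e b K) (x : E) (s : Finset ℕ)
    {μ : ℕ → ℝ} (hμ : ∀ i ∈ s, |μ i| ≤ 1) :
    ‖∑ i ∈ s, (μ i * b i x) • e i‖ ≤ 3 * K * ‖x‖ := by
  obtain ⟨t, hts, ht⟩ :=
    exists_subset_norm_add_sum_smul_le (fun i => b i x • e i) μ s hμ 0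
  simp only [zero_add, smul_smul] at ht
  calc _ ≤ ‖2 • ∑ i ∈ t, b i x • e i - ∑ i ∈ s, b i x • e i‖ := ht
    _ ≤ 2 * ‖∑ i ∈ t, b i x • e i‖ + ‖∑ i ∈ s, b i x • e i‖ := by
      refine (norm_sub_le _ _).trans ?_
      rw [two_nsmul, two_mul]
      gcongr
      exact norm_add_le _ _
    _ ≤ 2 * (K * ‖x‖) + K * ‖x‖ := by
      gcongr <;> exact h.norm_sum_coord_le _ x
    _ = 3 * K * ‖x‖ := by ring

theorem norm_sum_le_of_coord_eq (h : IsUnconditionalBasis e b K) {n : ℕ → ℕ}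
    (hn : n.Injective) {u : ℕ → E} {τ : ℕ → ℝ} (hτ : ∀ i, 1 / 2 ≤ τ i)
    (hu : ∀ j k, b (n j) (u k) = if j = k then τ (n k) else 0) (a : ℕ → ℝ) (s : Finset ℕ) :
    ‖∑ k ∈ s, a k • e (n k)‖ ≤ 6 * K * ‖∑ k ∈ s, a k • u k‖ := by
  set z := ∑ k ∈ s, a k • u k
  have hz : ∀ j, b (n j) z = if j ∈ s then a j * τ (n j) else 0 := by
    intro j
    simp [z, map_sum, hu]
  have hμ : ∀ i ∈ s.image n, |(2 * τ i)⁻¹| ≤ 1 := by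
    intro i _
    rw [abs_inv, abs_of_pos (by linarith [hτ i])]
    exact inv_le_one_of_one_le₀ (by linarith [hτ i])
  have hrepr : ∑ k ∈ s, a k • e (n k) =
      ∑ i ∈ s.image n, ((2 * τ i)⁻¹ * b i ((2 : ℝ) • z)) • e i := by
    rw [Finset.sum_image fun _ _ _ _ hij => hn hij]
    refine Finset.sum_congr rfl fun k hk => ?_
    have : τ (n k) ≠ 0 := by linarith [hτ (n k)]
    rw [map_smul, smul_eq_mul, hz, if_pos hk]
    congr 1
    field_simp
  calc _ ≤ 3 * K * ‖(2 : ℝ) • z‖ := hrepr ▸ h.norm_sum_mul_coord_le _ _ hμ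
    _ = 6 * K * ‖z‖ := by rw [norm_smul, Real.norm_two]; ring

theorem exists_continuousLinearMap_apply_eq [CompleteSpace F] (h : IsUnconditionalBasis e b K)
    (f : ℕ → F) (C : ℝ)
    (hf : ∀ (a : ℕ → ℝ) (s : Finset ℕ), ‖∑ j ∈ s, a j • f j‖ ≤ C * ‖∑ j ∈ s, a j • e j‖) :
    ∃ S : E →L[ℝ] F, ∀ j, S (e j) = f j := by
  let Q : ℕ → E →L[ℝ] F := fun N => ∑ j ∈ Finset.range N, (b j).smulRight (f j)
  have hQ : ∀ N x, Q N x = ∑ j ∈ Finset.range N, b j x • f j := by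
    intro N x
    simp [Q]
  have hcauchy : ∀ x, CauchySeq fun N => Q N x := by
    intro x
    have hP := cauchySeq_iff_tendsto_dist_atTop_0.1 (h.tendsto_sum x).cauchySeq
    have hdist : ∀ M N, M ≤ N → dist (Q M x) (Q N x) ≤
        C * dist (∑ j ∈ Finset.range M, b j x • e j) (∑ j ∈ Finset.range N, b j x • e j) := by
      intro M N hMN
      rw [dist_comm, dist_comm (∑ j ∈ _, _), dist_eq_norm, dist_eq_norm, hQ, hQ,
        ← Finset.sum_Ico_eq_sub _ hMN, ← Finset.sum_Ico_eq_sub _ hMN]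
      exact hf _ _
    refine cauchySeq_iff_tendsto_dist_atTop_0.2 (squeeze_zero (fun _ => dist_nonneg)
      (fun p => ?_) (by simpa using hP.const_mul C))
    rcases le_total p.1 p.2 with hp | hp
    · exact hdist _ _ hp
    · rw [dist_comm, dist_comm (∑ j ∈ _, _)]
      exact hdist _ _ hp
  choose Sf hSf using fun x => cauchySeq_tendsto_of_complete (hcauchy x)
  let S : E →ₗ[ℝ] F := linearMapOfTendsto Sf (fun N => (Q N : E →ₗ[ℝ] F))
    (tendsto_pi_nhds.2 hSf)
  refine ⟨S.mkContinuous C fun x => ?_, fun j => ?_⟩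
  · refine le_of_tendsto_of_tendsto' (hSf x).norm ((h.tendsto_sum x).norm.const_mul C)
      fun N => ?_
    rw [hQ]
    exact hf _ _
  · refine tendsto_nhds_unique (hSf (e j)) (tendsto_atTop_of_eventually_const (i₀ := j + 1)
      fun _ hN => ?_)
    simp [hQ, h.coord_apply]
    omega

theorem antilipschitz_of_norm_sum_le (h : IsUnconditionalBasis e b K) (A : E →L[ℝ] F)
    {κ : NNReal}
    (hA : ∀ (a : ℕ → ℝ) (s : Finset ℕ), ‖∑ j ∈ s, a j • e j‖ ≤ κ * ‖A (∑ j ∈ s, a j • e j)‖) :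
    AntilipschitzWith κ A :=
  A.antilipschitz_of_bound fun x => le_of_tendsto_of_tendsto' (h.tendsto_sum x).norm
    (((A.continuous.tendsto x).comp (h.tendsto_sum x)).norm.const_mul _) fun _ => hA _ _

theorem exists_block_approx (h : IsUnconditionalBasis e b K) (x : ℕ → E)
    (hx : ∀ i, Tendsto (fun m => b i (x m)) atTop (𝓝 0)) {η : ℕ → ℝ} (hη : ∀ k, 0 < η k) :
    ∃ n N : ℕ → ℕ, (∀ k, n k ∈ Finset.Ico (N k) (N (k + 1))) ∧
      ∀ k, ‖∑ i ∈ Finset.Ico (N k) (N (k + 1)), b i (x (n k)) • e i - x (n k)‖ < η k := by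
  have step : ∀ M k, ∃ p : ℕ × ℕ, p.1 ∈ Finset.Ico M p.2 ∧
      ‖∑ i ∈ Finset.Ico M p.2, b i (x p.1) • e i - x p.1‖ < η k := by
    intro M k
    have hη₂ : ‖(0 : E)‖ < η k / 2 := by simpa using hη k
    have hhead : Tendsto (fun m => ∑ i ∈ Finset.range M, b i (x m) • e i) atTop (𝓝 0) := by
      simpa using tendsto_finsetSum _ fun i _ => (hx i).smul_const (e i)
    obtain ⟨m, hm, hMm⟩ :=
      ((hhead.norm.eventually (gt_mem_nhds hη₂)).and (eventually_ge_atTop M)).exists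
    have htail := (h.tendsto_sum (x m)).sub_const (x m)
    rw [sub_self] at htail
    obtain ⟨M', hM', hmM'⟩ :=
      ((htail.norm.eventually (gt_mem_nhds hη₂)).and (eventually_gt_atTop m)).exists
    refine ⟨(m, M'), Finset.mem_Ico.2 ⟨hMm, hmM'⟩, ?_⟩
    rw [Finset.sum_Ico_eq_sub _ (hMm.trans hmM'.le), sub_right_comm]
    calc _ ≤ _ := norm_sub_le _ _
      _ < η k / 2 + η k / 2 := add_lt_add hM' hm
      _ = η k := add_halves _
  choose p hp using step
  let N : ℕ → ℕ := fun k => Nat.rec 0 (fun k Nk => (p Nk k).2) k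
  exact ⟨fun k => (p (N k) k).1, N, fun k => (hp (N k) k).1, fun k => (hp (N k) k).2⟩

theorem norm_le_of_approx_blocks (h : IsUnconditionalBasis e b K) {δ : ℝ} (hδ : 0 < δ)
    (he : ∀ n, δ ≤ ‖e n‖) {V : E →L[ℝ] E} {n : ℕ → ℕ} (hn : n.Injective) {u : ℕ → E}
    {τ : ℕ → ℝ} (hτ : ∀ i, 1 / 2 ≤ τ i)
    (hu : ∀ j k, b (n j) (u k) = if j = k then τ (n k) else 0)
    (hVu : ∀ k, ‖u k - V (e (n k))‖ ≤ δ / (24 * K ^ 2) * (1 / 2) ^ k)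
    (a : ℕ → ℝ) (s : Finset ℕ) :
    ‖∑ k ∈ s, a k • e (n k)‖ ≤ 12 * K * ‖V (∑ k ∈ s, a k • e (n k))‖ := by
  set y := ∑ k ∈ s, a k • e (n k)
  have hK : 0 < K := one_pos.trans_le h.one_le
  have ha : ∀ k ∈ s, |a k| ≤ K / δ * ‖y‖ := fun k hk => by
    simpa [y, h.coord_sum_smul hn, hk] using h.abs_coord_le hδ he (n k) y
  have hgeom : ∑ k ∈ s, ((1 : ℝ) / 2) ^ k ≤ 2 :=
    (summable_geometric_two.sum_le_tsum s fun _ _ => by positivity).trans_eq tsum_geometric_two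
  have hdiff : ‖∑ k ∈ s, a k • u k - V y‖ ≤ ‖y‖ / (12 * K) :=
    calc ‖∑ k ∈ s, a k • u k - V y‖ = ‖∑ k ∈ s, a k • (u k - V (e (n k)))‖ := by
          simp [y, map_sum, smul_sub, Finset.sum_sub_distrib]
      _ ≤ ∑ k ∈ s, K / δ * ‖y‖ * (δ / (24 * K ^ 2) * (1 / 2) ^ k) := by
          refine norm_sum_le_of_le _ fun k hk => ?_
          rw [norm_smul, Real.norm_eq_abs]
          gcongr
          exacts [ha k hk, hVu k]
      _ = ‖y‖ / (24 * K) * ∑ k ∈ s, ((1 : ℝ) / 2) ^ k := by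
          rw [Finset.mul_sum]
          refine Finset.sum_congr rfl fun k _ => ?_
          field_simp
      _ ≤ ‖y‖ / (24 * K) * 2 := by gcongr
      _ = ‖y‖ / (12 * K) := by ring
  have hy : ‖y‖ ≤ 6 * K * ‖V y‖ + ‖y‖ / 2 :=
    calc ‖y‖ ≤ 6 * K * ‖∑ k ∈ s, a k • u k‖ := h.norm_sum_le_of_coord_eq hn hτ hu a s
      _ ≤ 6 * K * (‖V y‖ + ‖y‖ / (12 * K)) := by
          gcongr
          exact (norm_le_insert' _ (V y)).trans (by gcongr)
      _ = 6 * K * ‖V y‖ + ‖y‖ / 2 := by field_simp; ring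
  linarith

theorem exists_strictMono_norm_le_norm_apply (h : IsUnconditionalBasis e b K) {δ : ℝ}
    (hδ : 0 < δ) (he : ∀ n, δ ≤ ‖e n‖) {V : E →L[ℝ] E} (hV : ∀ n, ‖e n - V (e n)‖ < δ / (2 * K))
    (hVe : ∀ i, Tendsto (fun m => b i (V (e m))) atTop (𝓝 0)) :
    ∃ n : ℕ → ℕ, StrictMono n ∧ ∀ (a : ℕ → ℝ) (s : Finset ℕ),
      ‖∑ k ∈ s, a k • e (n k)‖ ≤ 12 * K * ‖V (∑ k ∈ s, a k • e (n k))‖ := by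
  have hK : 0 < K := one_pos.trans_le h.one_le
  obtain ⟨n, N, hnN, happrox⟩ := h.exists_block_approx (fun m => V (e m)) hVe
    (η := fun k => δ / (24 * K ^ 2) * (1 / 2) ^ k) fun k => by positivity
  have hwin : ∀ {j k}, n j ∈ Finset.Ico (N k) (N (k + 1)) → j = k :=
    eq_of_mem_Ico_of_forall_mem_Ico hnN
  have hτ : ∀ i, 1 / 2 ≤ b i (V (e i)) := by
    intro i
    have h₁ := h.abs_coord_le hδ he i (e i - V (e i))
    rw [map_sub, h.coord_apply, if_pos rfl] at h₁
    have h₂ : K / δ * ‖e i - V (e i)‖ ≤ 1 / 2 :=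
      calc K / δ * ‖e i - V (e i)‖ ≤ K / δ * (δ / (2 * K)) := by gcongr; exact (hV i).le
        _ = 1 / 2 := by field_simp
    linarith [(abs_le.1 (h₁.trans h₂)).2]
  refine ⟨n, strictMono_nat_of_lt_succ fun k =>
      (Finset.mem_Ico.1 (hnN k)).2.trans_le (Finset.mem_Ico.1 (hnN (k + 1))).1,
    h.norm_le_of_approx_blocks hδ he (fun j k hjk => hwin (hjk ▸ hnN k)) hτ
      (u := fun k => ∑ i ∈ Finset.Ico (N k) (N (k + 1)), b i (V (e (n k))) • e i)
      (fun j k => ?_) fun k => (happrox k).le⟩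
  have := h.coord_sum_smul Function.injective_id (fun i => b i (V (e (n k))))
    (Finset.Ico (N k) (N (k + 1))) (n j)
  simp only [id] at this
  rw [this]
  split_ifs with h₁ h₂ h₂
  · rw [h₂]
  · exact absurd (hwin h₁) h₂
  · exact absurd (h₂ ▸ hnN k) h₁
  · rfl

end IsUnconditionalBasis

/-- Remark 6.13 of Odell–Tylli.  Let `E` be a non-reflexive Banach space with a weakly
null subsymmetric Schauder basis `(e_n)` (with coordinate functionals `b_n`):
the basis is `K`-unconditional and every subsequence `(e_{m_n})` is equivalent to `(e_n)`.
Then `E` fails the weakly compact approximation property: the set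
`D = {e_n : n ∈ ℕ} ∪ {0}` is weakly compact, and there is `ε > 0` such that any bounded
operator `V` on `E` with `sup_n ‖e_n - V e_n‖ < ε` is not weakly compact. -/
theorem stmt_15 {E : Type*} [NormedAddCommGroup E] [NormedSpace ℝ E] [CompleteSpace E]
    (hnonrefl : ¬ IsWeaklyCompact (Metric.closedBall (0 : E) 1))
    (e : ℕ → E) (b : ℕ → E →L[ℝ] ℝ)
    (hbio : ∀ i j, b i (e j) = if i = j then 1 else 0)
    (hexp : ∀ x : E, Tendsto (fun n => ∑ j ∈ Finset.range n, b j x • e j) atTop (nhds x))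
    (K : ℝ)
    (huncond : ∀ (a : ℕ → ℝ) (s t : Finset ℕ), s ⊆ t →
      ‖∑ j ∈ s, a j • e j‖ ≤ K * ‖∑ j ∈ t, a j • e j‖)
    (hsubsym : ∀ m : ℕ → ℕ, StrictMono m → ∃ c : ℝ, 0 < c ∧
      ∀ (a : ℕ → ℝ) (s : Finset ℕ),
        c * ‖∑ j ∈ s, a j • e j‖ ≤ ‖∑ j ∈ s, a j • e (m j)‖ ∧
        ‖∑ j ∈ s, a j • e (m j)‖ ≤ c⁻¹ * ‖∑ j ∈ s, a j • e j‖)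
    (hweaknull : Tendsto (fun n => toWeakSpace ℝ E (e n)) atTop (nhds 0)) :
    IsWeaklyCompact (Set.range e ∪ {0}) ∧
      ∃ ε : ℝ, 0 < ε ∧ ∀ V : E →L[ℝ] E,
        (∀ n, ‖e n - V (e n)‖ < ε) → ¬ IsWeaklyCompactOp V := by
  have hb : IsUnconditionalBasis e b K := ⟨hbio, hexp, huncond⟩
  have hK : 0 < K := one_pos.trans_le hb.one_le
  refine ⟨hweaknull.isWeaklyCompact_range_union_zero, ?_⟩
  obtain ⟨δ, hδ, he⟩ :=
    exists_pos_le_of_forall_strictMono (fun n => norm_pos_iff.2 (hb.ne_zero n)) fun m hm => by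
      obtain ⟨c, hc, hcm⟩ := hsubsym m hm
      exact ⟨c, hc, fun k => by simpa using (hcm (fun _ => 1) {k}).1⟩
  refine ⟨δ / (2 * K), by positivity, fun V hV hVwc => hnonrefl ?_⟩
  obtain ⟨n, hn, hVn⟩ := hb.exists_strictMono_norm_le_norm_apply hδ he hV
    fun i => tendsto_apply_of_tendsto_toWeakSpace hweaknull ((b i).comp V)
  obtain ⟨c, hc, hcn⟩ := hsubsym n hn
  obtain ⟨S, hS⟩ := hb.exists_continuousLinearMap_apply_eq (e ∘ n) c⁻¹ fun a s => (hcn a s).2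
  have hA : AntilipschitzWith ⟨12 * K / c, by positivity⟩ (V.comp S) :=
    hb.antilipschitz_of_norm_sum_le _ fun a s => by
      have hSs : S (∑ j ∈ s, a j • e j) = ∑ j ∈ s, a j • e (n j) := by simp [map_sum, hS]
      calc ‖∑ j ∈ s, a j • e j‖ ≤ c⁻¹ * ‖∑ j ∈ s, a j • e (n j)‖ := by
            rw [le_inv_mul_iff₀ hc]; exact (hcn a s).1
        _ ≤ c⁻¹ * (12 * K * ‖V (∑ j ∈ s, a j • e (n j))‖) := by gcongr; exact hVn a s
        _ = 12 * K / c * ‖V.comp S (∑ j ∈ s, a j • e j)‖ := by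
            rw [V.comp_apply, hSs]; ring
  exact isWeaklyCompact_closedBall_of_antilipschitz hA (hVwc.comp S)
end
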